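/- arXiv:1907.03808 — 4 statements merged into one kernel-verified Lean document; each statement's English description precedes it below -/
import Mathlib

section
/- Let p₁, …, p_N be random variables taking values in {1/2, 1}, where the null indices form a set H₀, the variables (p_l)_{l ∈ H₀} are i.i.d. with P(p_l = 1/2) = P(p_l = 1) = 1/2, and they are independent of (p_l)_{l ∉ H₀}. For q ∈ [0,1] and a subset K ⊆ {1,…,N}, define k̂ = max{k ∈ K : #{l ≤ k : p_l > 1/2} / max(#{l ≤ k : p_l ≤ 1/2}, 1) ≤ q} (with k̂ = 0 if the set is empty), V = #{l ≤ k̂ : l ∈ H₀ and p_l ≤ 1/2}, and R = #{l ≤ k̂ : p_l ≤ 1/2}. Then E[V / (R + q⁻¹)] ≤ q. -/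
/-!
Let `S ⊆ H0` be the set of nulls with `p = 1/2`; it is uniform on the subsets of `H0` and
independent of the non-null p-values, so it suffices to average over `S` with the non-nulls fixed.
The estimate `#{l ≤ k̂ : p_l > 1/2} / max(R, 1) ≤ q` bounds the nulls with `p = 1` up to `k̂` by
`q R`, whence `V / (R + q⁻¹) ≤ q · #(S ∩ [0, τ)) / (1 + #((H0 \ S) ∩ [0, τ)))` with `τ = k̂ + 1`.
Read with time running backwards, this knockoff ratio is a supermartingale for the filtration that
reveals the number of elements of `S` below `t` and `S` itself above `t`, and `τ` is a stopping
time for it; optional stopping bounds its mean by the mean at the final time, `1 - 2^(-#H0)`.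
-/

open scoped Classical
open MeasureTheory ProbabilityTheory Finset

noncomputable def knockoffRatio (E : Finset ℕ) (t : ℕ) (s : Finset ℕ) : ℝ :=
  #(s ∩ range t) / (1 + #((E \ s) ∩ range t))

lemma knockoffRatio_of_forall_lt {E s : Finset ℕ} {t : ℕ} (hs : s ⊆ E) (h : ∀ x ∈ E, x < t) :
    knockoffRatio E t s = #s / (1 + #(E \ s)) := by
  have hr : ∀ u ⊆ E, u ∩ range t = u := fun u hu =>
    inter_eq_left.2 fun x hx => mem_range.2 (h x (hu hx))
  rw [knockoffRatio, hr s hs, hr _ sdiff_subset]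

lemma knockoffRatio_insert_of_le {E s : Finset ℕ} {a t : ℕ} (ht : t ≤ a) :
    knockoffRatio (insert a E) t s = knockoffRatio E t (s.erase a) := by
  have hsub : ∀ u : Finset ℕ, u.erase a ∩ range t = u ∩ range t := fun u => by
    ext x; simp only [mem_inter, mem_erase, mem_range]
    exact ⟨fun h => ⟨h.1.2, h.2⟩, fun h => ⟨⟨by omega, h.1⟩, h.2⟩⟩
  rw [knockoffRatio, knockoffRatio, hsub, ← hsub (insert a E \ s), ← hsub (E \ s.erase a)]
  congr 5
  ext x; simp only [mem_erase, mem_sdiff, mem_insert]; tauto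

/-- A stopping time for the filtration, indexed by decreasing `t`, in which `knockoffRatio E t s`
is a supermartingale when `s` is a uniformly random subset of `E`. -/
def IsKnockoffStoppingTime (E : Finset ℕ) (τ : Finset ℕ → ℕ) : Prop :=
  ∀ t, ∀ s ⊆ E, ∀ s' ⊆ E, #(s ∩ range t) = #(s' ∩ range t) → s \ range t = s' \ range t →
    t ≤ τ s → t ≤ τ s'

namespace IsKnockoffStoppingTime

variable {E : Finset ℕ} {τ : Finset ℕ → ℕ}

lemma le_of_card_eq (hτ : IsKnockoffStoppingTime E τ) {t : ℕ} (ht : ∀ x ∈ E, x < t)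
    {s s' : Finset ℕ} (hs : s ⊆ E) (hs' : s' ⊆ E) (hcard : #s = #s') (h : t ≤ τ s) :
    t ≤ τ s' := by
  have hr : ∀ u ⊆ E, u ∩ range t = u := fun u hu =>
    inter_eq_left.2 fun x hx => mem_range.2 (ht x (hu hx))
  have hd : ∀ u ⊆ E, u \ range t = ∅ := fun u hu =>
    sdiff_eq_empty_iff_subset.2 fun x hx => mem_range.2 (ht x (hu hx))
  exact hτ t s hs s' hs' (by rw [hr s hs, hr s' hs', hcard]) (by rw [hd s hs, hd s' hs']) h

lemma min_union {a : ℕ} (hτ : IsKnockoffStoppingTime (insert a E) τ) {b : Finset ℕ}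
    (hb : b ⊆ {a}) : IsKnockoffStoppingTime E (fun s => min (τ (b ∪ s)) a) := by
  intro t s hs s' hs' hcard hdiff h
  rw [le_min_iff] at h ⊢
  have hbt : b ∩ range t = ∅ := eq_empty_of_forall_notMem fun x hx => by
    obtain ⟨hxb, hxt⟩ := mem_inter.1 hx
    rw [mem_singleton.1 (hb hxb), mem_range] at hxt
    exact hxt.not_ge h.2
  have hsub : ∀ u ⊆ E, b ∪ u ⊆ insert a E := fun u hu =>
    union_subset (hb.trans (singleton_subset_iff.2 (mem_insert_self a E)))
      (hu.trans (subset_insert a E))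
  refine ⟨hτ t _ (hsub s hs) _ (hsub s' hs') ?_ ?_ h.1, h.2⟩
  · rw [union_inter_distrib_right, union_inter_distrib_right, hbt, empty_union, empty_union,
      hcard]
  · rw [union_sdiff_distrib, union_sdiff_distrib, hdiff]

end IsKnockoffStoppingTime

/-- The increments of `knockoffRatio` from time `a` to `a + 1` over the `(w + 1)`-subsets of an
`(m + 1)`-set with maximum `a`, summed separately over the subsets that avoid `a` and those that
contain it. -/
lemma choose_mul_knockoffRatio_increment (m w : ℕ) :
    (m.choose (w + 1) : ℝ) * ((w + 1) / (m - w + 1) - (w + 1) / (m - w)) +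
      m.choose w * ((w + 1) / (m - w + 1) - w / (m - w + 1)) = if w = m then 1 else 0 := by
  rcases lt_trichotomy w m with hlt | rfl | hgt
  · have hchoose : (m.choose (w + 1) : ℝ) * (w + 1) = m.choose w * (m - w) := by
      have h := congrArg (Nat.cast : ℕ → ℝ) (Nat.choose_succ_right_eq m w)
      push_cast [Nat.cast_sub hlt.le] at h
      exact h
    have hmw : (0 : ℝ) < m - w := sub_pos.2 (by exact_mod_cast hlt)
    rw [if_neg hlt.ne]
    field_simp
    linear_combination -hchoose
  · simp
  · rw [Nat.choose_eq_zero_of_lt hgt, Nat.choose_eq_zero_of_lt (by omega), if_neg hgt.ne']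
    simp

lemma sum_powersetCard_insert_sub_knockoffRatio {E : Finset ℕ} {a : ℕ} (ha : ∀ x ∈ E, x < a)
    (v : ℕ) :
    ∑ u ∈ powersetCard v (insert a E),
      ((#u : ℝ) / (1 + #(insert a E \ u)) - knockoffRatio (insert a E) a u) =
      if v = #E + 1 then 1 else 0 := by
  have haE : a ∉ E := fun h => (ha a h).false
  have hratio : ∀ u ⊆ E, knockoffRatio E a u = #u / (1 + #(E \ u)) := fun u hu =>
    knockoffRatio_of_forall_lt hu ha
  have hsdiff : ∀ u ⊆ E, (#(E \ u) : ℝ) = #E - #u := fun u hu => by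
    rw [card_sdiff_of_subset hu, Nat.cast_sub (card_le_card hu)]
  cases v with
  | zero => simp [knockoffRatio]
  | succ w =>
    have hdisj : Disjoint (powersetCard (w + 1) E) ((powersetCard w E).image (insert a)) := by
      refine disjoint_left.2 fun u hu hu' => ?_
      obtain ⟨t, -, rfl⟩ := mem_image.1 hu'
      exact haE ((mem_powersetCard.1 hu).1 (mem_insert_self a t))
    have hinj : Set.InjOn (insert a) (powersetCard w E : Set (Finset ℕ)) := fun u hu u' hu' h => by
      rw [← erase_insert (fun h => haE ((mem_powersetCard.1 hu).1 h)), h,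
        erase_insert (fun h => haE ((mem_powersetCard.1 hu').1 h))]
    have hwithout : ∑ u ∈ powersetCard (w + 1) E,
        ((#u : ℝ) / (1 + #(insert a E \ u)) - knockoffRatio (insert a E) a u) =
        (#E).choose (w + 1) * ((w + 1) / (#E - w + 1) - (w + 1) / (#E - w)) := by
      rw [← card_powersetCard, ← nsmul_eq_mul, ← sum_const]
      refine sum_congr rfl fun u hu => ?_
      obtain ⟨huE, hcard⟩ := mem_powersetCard.1 hu
      have hau : a ∉ u := fun h => haE (huE h)
      rw [knockoffRatio_insert_of_le le_rfl, erase_eq_of_notMem hau, hratio u huE,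
        insert_sdiff_of_notMem _ hau, card_insert_of_notMem (fun h => haE (mem_sdiff.1 h).1)]
      push_cast [hsdiff u huE, hcard]
      ring
    have hwith : ∑ u ∈ powersetCard w E,
        ((#(insert a u) : ℝ) / (1 + #(insert a E \ insert a u)) -
          knockoffRatio (insert a E) a (insert a u)) =
        (#E).choose w * ((w + 1) / (#E - w + 1) - w / (#E - w + 1)) := by
      rw [← card_powersetCard, ← nsmul_eq_mul, ← sum_const]
      refine sum_congr rfl fun u hu => ?_
      obtain ⟨huE, hcard⟩ := mem_powersetCard.1 hu
      have hau : a ∉ u := fun h => haE (huE h)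
      rw [knockoffRatio_insert_of_le le_rfl, erase_insert hau, hratio u huE,
        card_insert_of_notMem hau, insert_sdiff_insert, sdiff_insert_of_notMem haE]
      push_cast [hsdiff u huE, hcard]
      ring
    rw [powersetCard_succ_insert haE, sum_union hdisj, sum_image hinj, hwithout, hwith,
      choose_mul_knockoffRatio_increment]
    simp

lemma sum_ite_lt_sub_knockoffRatio_le_one {E : Finset ℕ} {a : ℕ} (ha : ∀ x ∈ E, x < a)
    {τ : Finset ℕ → ℕ} (hτ : IsKnockoffStoppingTime (insert a E) τ) :
    ∑ u ∈ (insert a E).powerset,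
      (if a < τ u then (#u : ℝ) / (1 + #(insert a E \ u)) - knockoffRatio (insert a E) a u
        else 0) ≤ 1 := by
  have haE : a ∉ E := fun h => (ha a h).false
  have hle : ∀ x ∈ insert a E, x < a + 1 := fun x hx => by
    rcases mem_insert.1 hx with rfl | hx
    · exact lt_add_one x
    · exact (ha x hx).trans (lt_add_one a)
  rw [sum_powerset]
  calc _ ≤ ∑ v ∈ range (#(insert a E) + 1), if v = #E + 1 then (1 : ℝ) else 0 := by
        refine sum_le_sum fun v _ => ?_
        by_cases hstop : ∃ u₀ ∈ powersetCard v (insert a E), a < τ u₀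
        · obtain ⟨u₀, hu₀, hτu₀⟩ := hstop
          rw [← sum_powersetCard_insert_sub_knockoffRatio ha v]
          refine (sum_congr rfl fun u hu => if_pos ?_).le
          obtain ⟨hu₀E, hu₀card⟩ := mem_powersetCard.1 hu₀
          obtain ⟨huE, hucard⟩ := mem_powersetCard.1 hu
          exact hτ.le_of_card_eq hle hu₀E huE (hu₀card.trans hucard.symm) hτu₀
        · push Not at hstop
          rw [sum_eq_zero fun u hu => if_neg (not_lt.2 (hstop u hu))]
          split_ifs <;> norm_num
    _ = 1 := by simp [card_insert_of_notMem haE]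

theorem sum_knockoffRatio_le (E : Finset ℕ) {τ : Finset ℕ → ℕ}
    (hτ : IsKnockoffStoppingTime E τ) :
    ∑ s ∈ E.powerset, knockoffRatio E (τ s) s ≤ 2 ^ #E - 1 := by
  induction E using Finset.induction_on_max generalizing τ with
  | empty => simp [knockoffRatio]
  | insert a E ha ih =>
    have haE : a ∉ E := fun h => (ha a h).false
    -- Stop at `a` at the latest, then add what running on to `τ` contributes: by the stopping
    -- property this happens on whole cardinality classes, and the increments over a class sum to
    -- `0`, except for the class of `insert a E` itself, where they sum to `1`.
    have hsplit : ∀ u ∈ (insert a E).powerset, knockoffRatio (insert a E) (τ u) u =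
        knockoffRatio (insert a E) (min (τ u) a) u +
          if a < τ u then (#u : ℝ) / (1 + #(insert a E \ u)) - knockoffRatio (insert a E) a u
          else 0 := by
      intro u hu
      split_ifs with h
      · rw [min_eq_right h.le, knockoffRatio_of_forall_lt (mem_powerset.1 hu)]
        · ring
        · intro x hx
          rcases mem_insert.1 hx with rfl | hx
          exacts [h, (ha x hx).trans h]
      · rw [min_eq_left (not_lt.1 h), add_zero]
    have hstopped : ∑ u ∈ (insert a E).powerset, knockoffRatio (insert a E) (min (τ u) a) u ≤
        2 * (2 ^ #E - 1) := by
      have h₀ := ih (hτ.min_union (b := ∅) (empty_subset _))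
      have h₁ := ih (hτ.min_union (b := {a}) subset_rfl)
      simp only [empty_union, ← insert_eq] at h₀ h₁
      have e₀ : ∑ s ∈ E.powerset, knockoffRatio (insert a E) (min (τ s) a) s =
          ∑ s ∈ E.powerset, knockoffRatio E (min (τ s) a) s :=
        sum_congr rfl fun s hs => by
          rw [knockoffRatio_insert_of_le (min_le_right _ _),
            erase_eq_of_notMem fun h => haE (mem_powerset.1 hs h)]
      have e₁ : ∑ s ∈ E.powerset, knockoffRatio (insert a E) (min (τ (insert a s)) a) (insert a s) =
          ∑ s ∈ E.powerset, knockoffRatio E (min (τ (insert a s)) a) s :=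
        sum_congr rfl fun s hs => by
          rw [knockoffRatio_insert_of_le (min_le_right _ _),
            erase_insert fun h => haE (mem_powerset.1 hs h)]
      rw [sum_powerset_insert haE, e₀, e₁]
      linarith
    rw [sum_congr rfl hsplit, sum_add_distrib, card_insert_of_notMem haE, pow_succ]
    linarith [sum_ite_lt_sub_knockoffRatio_le_one ha hτ]

-- `d` stands for the set of indices with `p_l ≤ 1/2`; then `knockoffStop q K d` is `k̂` and
-- `modifiedFDP q K H0 d` is `V / (R + q⁻¹)`.
noncomputable def fdpHat (d : Finset ℕ) (k : ℕ) : ℝ :=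
  #(Icc 1 k \ d) / max (#(Icc 1 k ∩ d) : ℝ) 1

noncomputable def knockoffStop (q : ℝ) (K d : Finset ℕ) : ℕ :=
  (K.filter fun k => fdpHat d k ≤ q).sup id

noncomputable def modifiedFDP (q : ℝ) (K H d : Finset ℕ) : ℝ :=
  #(Icc 1 (knockoffStop q K d) ∩ d ∩ H) / (#(Icc 1 (knockoffStop q K d) ∩ d) + q⁻¹)

lemma fdpHat_knockoffStop_le {q : ℝ} (hq : 0 ≤ q) (K d : Finset ℕ) :
    fdpHat d (knockoffStop q K d) ≤ q := by
  rcases (K.filter fun k => fdpHat d k ≤ q).eq_empty_or_nonempty with h | h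
  · rw [knockoffStop, h]
    simpa [fdpHat] using hq
  · obtain ⟨k, hk, hsup⟩ := exists_mem_eq_sup _ h id
    rw [knockoffStop, hsup]
    exact (mem_filter.1 hk).2

lemma fdpHat_congr {d d' : Finset ℕ} {k : ℕ} (h : #(Icc 1 k ∩ d) = #(Icc 1 k ∩ d')) :
    fdpHat d k = fdpHat d' k := by
  have h' : #(Icc 1 k \ d) = #(Icc 1 k \ d') := by
    have := card_sdiff_add_card_inter (Icc 1 k) d
    have := card_sdiff_add_card_inter (Icc 1 k) d'
    omega
  rw [fdpHat, fdpHat, h, h']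

lemma knockoffStop_le {q : ℝ} {K : Finset ℕ} {N : ℕ} (hK : K ⊆ Icc 1 N) (d : Finset ℕ) :
    knockoffStop q K d ≤ N :=
  Finset.sup_le fun _ hk => (mem_Icc.1 (hK (mem_filter.1 hk).1)).2

lemma card_Icc_inter_eq {u : Finset ℕ} (hu : 0 ∉ u) {t k : ℕ} (ht : t ≤ k + 1) :
    #(Icc 1 k ∩ u) = #(u ∩ range t) + #(Icc 1 k ∩ (u \ range t)) := by
  rw [← card_union_of_disjoint (disjoint_left.2 fun x hx hx' =>
    (mem_sdiff.1 (mem_inter.1 hx').2).2 (mem_inter.1 hx).2)]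
  congr 1
  ext x
  have hx0 : x ∈ u → x ≠ 0 := fun hx h => hu (h ▸ hx)
  simp only [mem_inter, mem_Icc, mem_union, mem_sdiff, mem_range]
  constructor
  · rintro ⟨hxk, hxu⟩
    by_cases hxt : x < t
    exacts [Or.inl ⟨hxu, hxt⟩, Or.inr ⟨hxk, hxu, hxt⟩]
  · rintro (⟨hxu, hxt⟩ | ⟨hxk, hxu, -⟩)
    exacts [⟨⟨Nat.one_le_iff_ne_zero.2 (hx0 hxu), by omega⟩, hxu⟩, ⟨hxk, hxu⟩]

lemma isKnockoffStoppingTime_knockoffStop (q : ℝ) (K : Finset ℕ) {H c : Finset ℕ} (hH : 0 ∉ H)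
    (hc : Disjoint H c) : IsKnockoffStoppingTime H (fun s => knockoffStop q K (s ∪ c) + 1) := by
  intro t s hs s' hs' hcard hdiff (h : t ≤ knockoffStop q K (s ∪ c) + 1)
  show t ≤ knockoffStop q K (s' ∪ c) + 1
  have hcount : ∀ k, t ≤ k + 1 → #(Icc 1 k ∩ (s ∪ c)) = #(Icc 1 k ∩ (s' ∪ c)) := by
    intro k hk
    have hsplit : ∀ u ⊆ H, #(Icc 1 k ∩ (u ∪ c)) =
        #(u ∩ range t) + #(Icc 1 k ∩ (u \ range t)) + #(Icc 1 k ∩ c) := fun u hu => by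
      rw [inter_union_distrib_left, card_union_of_disjoint
        ((hc.mono_left hu).mono inter_subset_right inter_subset_right),
        card_Icc_inter_eq (fun h => hH (hu h)) hk]
    rw [hsplit s hs, hsplit s' hs', hcard, hdiff]
  obtain ht | ht : t ≤ 1 ∨ 0 < t - 1 := by omega
  · omega
  obtain ⟨k, hk, hle : t - 1 ≤ k⟩ :=
    (Finset.le_sup_iff ht).1 (show t - 1 ≤ knockoffStop q K (s ∪ c) by omega)
  rw [mem_filter, fdpHat_congr (hcount k (by omega))] at hk
  have : t - 1 ≤ knockoffStop q K (s' ∪ c) := (Finset.le_sup_iff ht).2 ⟨k, mem_filter.2 hk, hle⟩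
  omega

lemma modifiedFDP_le_mul_knockoffRatio {q : ℝ} (hq : 0 < q) (K : Finset ℕ) {H c s : Finset ℕ}
    (hH : 0 ∉ H) (hc : Disjoint H c) (hs : s ⊆ H) :
    modifiedFDP q K H (s ∪ c) ≤ q * knockoffRatio H (knockoffStop q K (s ∪ c) + 1) s := by
  set k := knockoffStop q K (s ∪ c)
  have hV : Icc 1 k ∩ (s ∪ c) ∩ H = s ∩ range (k + 1) := by
    ext x
    have hx0 : x ∈ H → x ≠ 0 := fun hx h => hH (h ▸ hx)
    have hxc : x ∈ H → x ∉ c := fun hx => disjoint_left.1 hc hx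
    simp only [mem_inter, mem_Icc, mem_union, mem_range]
    constructor
    · rintro ⟨⟨⟨-, hxk⟩, hxs | hxc'⟩, hxH⟩
      exacts [⟨hxs, by omega⟩, absurd hxc' (hxc hxH)]
    · rintro ⟨hxs, hxk⟩
      exact ⟨⟨⟨Nat.one_le_iff_ne_zero.2 (hx0 (hs hxs)), by omega⟩, Or.inl hxs⟩, hs hxs⟩
  have hW : (H \ s) ∩ range (k + 1) ⊆ Icc 1 k \ (s ∪ c) := by
    intro x hx
    obtain ⟨hxH, hxs⟩ := mem_sdiff.1 (mem_inter.1 hx).1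
    have hxk := mem_range.1 (mem_inter.1 hx).2
    have hx0 : x ≠ 0 := fun h => hH (h ▸ hxH)
    refine mem_sdiff.2 ⟨mem_Icc.2 ⟨by omega, by omega⟩, fun hx' => ?_⟩
    rcases mem_union.1 hx' with h | h
    exacts [hxs h, disjoint_left.1 hc hxH h]
  have hfdp := fdpHat_knockoffStop_le hq.le K (s ∪ c)
  rw [fdpHat, div_le_iff₀ (by positivity)] at hfdp
  have hVR : #(s ∩ range (k + 1)) ≤ #(Icc 1 k ∩ (s ∪ c)) := by
    rw [← hV]; exact card_le_card inter_subset_left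
  rw [modifiedFDP, knockoffRatio, hV]
  set V := #(s ∩ range (k + 1))
  set R := #(Icc 1 k ∩ (s ∪ c))
  have hWR : (#((H \ s) ∩ range (k + 1)) : ℝ) ≤ q * max (R : ℝ) 1 :=
    (Nat.cast_le.2 (card_le_card hW)).trans hfdp
  rcases Nat.eq_zero_or_pos R with hR | hR
  · simp [show V = 0 by omega]
  rw [max_eq_left (by exact_mod_cast hR)] at hWR
  calc (V : ℝ) / (R + q⁻¹) = q * V / (q * R + 1) := by field_simp
    _ ≤ q * V / (1 + #((H \ s) ∩ range (k + 1))) :=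
      div_le_div_of_nonneg_left (by positivity) (by positivity) (by linarith)
    _ = q * (V / (1 + #((H \ s) ∩ range (k + 1)))) := mul_div_assoc _ _ _

theorem sum_modifiedFDP_le {q : ℝ} (hq : 0 < q) (K : Finset ℕ) {H c : Finset ℕ} (hH : 0 ∉ H)
    (hc : Disjoint H c) : ∑ s ∈ H.powerset, modifiedFDP q K H (s ∪ c) ≤ q * 2 ^ #H :=
  calc _ ≤ ∑ s ∈ H.powerset, q * knockoffRatio H (knockoffStop q K (s ∪ c) + 1) s :=
        sum_le_sum fun s hs => modifiedFDP_le_mul_knockoffRatio hq K hH hc (mem_powerset.1 hs)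
    _ = q * ∑ s ∈ H.powerset, knockoffRatio H (knockoffStop q K (s ∪ c) + 1) s :=
        (mul_sum _ _ _).symm
    _ ≤ q * (2 ^ #H - 1) := by
        gcongr
        exact sum_knockoffRatio_le H (isKnockoffStoppingTime_knockoffStop q K hH hc)
    _ ≤ q * 2 ^ #H := by gcongr; linarith

section Probability

variable {Ω : Type*} [MeasurableSpace Ω] {μ : Measure Ω}

lemma integral_comp_eq_sum [IsFiniteMeasure μ] {α : Type*} {Z : Ω → α} {T : Finset α}
    (hZ : ∀ ω, Z ω ∈ T) (hmeas : ∀ t ∈ T, MeasurableSet (Z ⁻¹' {t})) (f : α → ℝ) :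
    ∫ ω, f (Z ω) ∂μ = ∑ t ∈ T, μ.real (Z ⁻¹' {t}) * f t := by
  have hsum : ∀ ω, f (Z ω) = ∑ t ∈ T, (Z ⁻¹' {t}).indicator (fun _ => f t) ω := fun ω => by
    simp [Set.indicator_apply, hZ ω]
  simp_rw [hsum]
  rw [integral_finsetSum _ fun t ht => (integrable_const _).indicator (hmeas t ht)]
  exact sum_congr rfl fun t ht => by rw [integral_indicator_const _ (hmeas t ht), smul_eq_mul]

theorem integral_comp_le_of_uniform_of_indepFun [IsProbabilityMeasure μ] {α β : Type*}
    {S : Ω → α} {C : Ω → β} {A : Finset α} {B : Finset β} (hS : ∀ ω, S ω ∈ A)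
    (hC : ∀ ω, C ω ∈ B) (hSmeas : ∀ s ∈ A, MeasurableSet (S ⁻¹' {s}))
    (hCmeas : ∀ c ∈ B, MeasurableSet (C ⁻¹' {c}))
    (hunif : ∀ s ∈ A, μ.real (S ⁻¹' {s}) = (#A : ℝ)⁻¹)
    (hindep : ∀ s ∈ A, ∀ c ∈ B,
      μ.real (S ⁻¹' {s} ∩ C ⁻¹' {c}) = μ.real (S ⁻¹' {s}) * μ.real (C ⁻¹' {c}))
    {f : α → β → ℝ} {b : ℝ} (hf : ∀ c ∈ B, ∑ s ∈ A, f s c ≤ b * #A) :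
    ∫ ω, f (S ω) (C ω) ∂μ ≤ b := by
  have hA : (0 : ℝ) < #A := by
    obtain ⟨ω⟩ := nonempty_of_isProbabilityMeasure μ
    exact_mod_cast card_pos.2 ⟨_, hS ω⟩
  have hfiber : ∀ p : α × β, (fun ω => (S ω, C ω)) ⁻¹' {p} = S ⁻¹' {p.1} ∩ C ⁻¹' {p.2} :=
    fun p => by ext ω; simp [Prod.ext_iff]
  have htotal : ∑ c ∈ B, μ.real (C ⁻¹' {c}) = 1 := by
    simpa using (integral_comp_eq_sum (μ := μ) hC hCmeas fun _ => (1 : ℝ)).symm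
  calc ∫ ω, f (S ω) (C ω) ∂μ
      = ∑ c ∈ B, μ.real (C ⁻¹' {c}) * ((#A : ℝ)⁻¹ * ∑ s ∈ A, f s c) := by
        refine (integral_comp_eq_sum (Z := fun ω => (S ω, C ω))
          (fun ω => mem_product.2 ⟨hS ω, hC ω⟩) (fun p hp => hfiber p ▸
            (hSmeas _ (mem_product.1 hp).1).inter (hCmeas _ (mem_product.1 hp).2))
          fun p => f p.1 p.2).trans ?_
        rw [sum_product, sum_comm]
        refine sum_congr rfl fun c hc => ?_
        rw [mul_sum, mul_sum]
        refine sum_congr rfl fun s hs => ?_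
        rw [hfiber, hindep s hs c hc, hunif s hs]
        ring
    _ ≤ ∑ c ∈ B, μ.real (C ⁻¹' {c}) * b := by
        gcongr with c hc
        rw [inv_mul_le_iff₀ hA, mul_comm]
        exact hf c hc
    _ = b := by rw [← sum_mul, htotal, one_mul]

lemma measure_le_half_eq_half [IsProbabilityMeasure μ] {X : Ω → ℝ} (hX : Measurable X)
    (h₁ : μ {ω | X ω = 1/2} = 1/2) (h₂ : μ {ω | X ω = 1} = 1/2) :
    μ {ω | X ω ≤ 1/2} = 1/2 := by
  have hA : MeasurableSet {ω | X ω ≤ 1/2} := measurableSet_le hX measurable_const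
  have hle : 1/2 ≤ μ {ω | X ω ≤ 1/2} :=
    h₁ ▸ measure_mono fun ω (h : X ω = 1/2) => show X ω ≤ 1/2 from h.le
  have hcompl : 1/2 ≤ μ {ω | X ω ≤ 1/2}ᶜ :=
    h₂ ▸ measure_mono fun ω (h : X ω = 1) => show ¬ X ω ≤ 1/2 by rw [h]; norm_num
  refine le_antisymm ((ENNReal.add_le_add_iff_right (by norm_num : (1/2 : ENNReal) ≠ ⊤)).1 ?_) hle
  calc μ {ω | X ω ≤ 1/2} + 1/2 ≤ μ {ω | X ω ≤ 1/2} + μ {ω | X ω ≤ 1/2}ᶜ := by gcongr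
    _ = 1/2 + 1/2 := by rw [prob_add_prob_compl hA, ENNReal.add_halves]

end Probability

section BelowHalf

variable {Ω : Type*}

noncomputable def belowHalf (P : ℕ → Ω → ℝ) (I : Finset ℕ) (ω : Ω) : Finset ℕ :=
  I.filter fun l => P l ω ≤ 1/2

variable {P : ℕ → Ω → ℝ} {I s : Finset ℕ}

lemma belowHalf_preimage_singleton (hs : s ⊆ I) :
    belowHalf P I ⁻¹' {s} = {ω | ∀ l : I, P l ω ≤ 1/2 ↔ (l : ℕ) ∈ s} := by
  ext ω
  simp only [Set.mem_preimage, Set.mem_singleton_iff, belowHalf, Set.mem_ofPred_eq,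
    Finset.ext_iff, mem_filter, Subtype.forall]
  refine ⟨fun h l hl => by rw [← h l]; simp [hl], fun h l => ?_⟩
  by_cases hl : l ∈ I
  · simpa [hl] using h l hl
  · simpa [hl] using fun h' => hl (hs h')

variable [MeasurableSpace Ω] {μ : Measure Ω}

lemma measurableSet_belowHalf_preimage (hP : ∀ l, Measurable (P l)) (hs : s ⊆ I) :
    MeasurableSet (belowHalf P I ⁻¹' {s}) := by
  rw [belowHalf_preimage_singleton hs]
  measurability

lemma measureReal_belowHalf_preimage [IsProbabilityMeasure μ]
    (hind : iIndepFun (fun l : I => P l) μ) (hP : ∀ l, Measurable (P l))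
    (hhalf : ∀ l ∈ I, μ {ω | P l ω ≤ 1/2} = 1/2) (hs : s ⊆ I) :
    μ.real (belowHalf P I ⁻¹' {s}) = (2 ^ #I)⁻¹ := by
  have hset : belowHalf P I ⁻¹' {s} = ⋂ l ∈ (univ : Finset I), P l ⁻¹' {x | x ≤ 1/2 ↔ ↑l ∈ s} := by
    rw [belowHalf_preimage_singleton hs]
    ext ω
    simp
  have hfactor : ∀ l : I, μ (P l ⁻¹' {x | x ≤ 1/2 ↔ ↑l ∈ s}) = 2⁻¹ := by
    intro l
    by_cases hls : (l : ℕ) ∈ s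
    · simpa [hls] using hhalf l l.2
    · simp only [hls, iff_false]
      rw [show P l ⁻¹' {x | ¬ x ≤ 1/2} = {ω | P l ω ≤ 1/2}ᶜ from rfl,
        prob_compl_eq_one_sub (measurableSet_le (hP l) measurable_const), hhalf l l.2]
      norm_num
  rw [measureReal_def, hset, hind.measure_inter_preimage_eq_mul _ fun l _ => by measurability,
    prod_congr rfl fun l _ => hfactor l, prod_const, card_univ, Fintype.card_coe]
  simp

lemma measureReal_belowHalf_inter_preimage {J c : Finset ℕ}
    (hindep : IndepFun (fun ω (l : I) => P l ω) (fun ω (l : J) => P l ω) μ) (hs : s ⊆ I)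
    (hc : c ⊆ J) :
    μ.real (belowHalf P I ⁻¹' {s} ∩ belowHalf P J ⁻¹' {c}) =
      μ.real (belowHalf P I ⁻¹' {s}) * μ.real (belowHalf P J ⁻¹' {c}) := by
  rw [belowHalf_preimage_singleton hs, belowHalf_preimage_singleton hc]
  simp only [measureReal_def]
  rw [← ENNReal.toReal_mul]
  congr 1
  exact hindep.measure_inter_preimage_eq_mul {v | ∀ l : I, v l ≤ 1/2 ↔ (l : ℕ) ∈ s}
    {v | ∀ l : J, v l ≤ 1/2 ↔ (l : ℕ) ∈ c} (by measurability) (by measurability)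

end BelowHalf

section Identification

variable {Ω : Type*} (P : ℕ → Ω → ℝ) (ω : Ω) {k N : ℕ}

lemma mem_belowHalf_Icc_iff (hk : k ≤ N) {l : ℕ} (hl : l ∈ Icc 1 k) :
    l ∈ belowHalf P (Icc 1 N) ω ↔ P l ω ≤ 1/2 := by
  rw [belowHalf, mem_filter, and_iff_right (Icc_subset_Icc_right hk hl)]

lemma filter_Icc_le_half (hk : k ≤ N) :
    (Icc 1 k).filter (fun l => P l ω ≤ 1/2) = Icc 1 k ∩ belowHalf P (Icc 1 N) ω := by
  ext l
  by_cases hl : l ∈ Icc 1 k <;> simp [hl, mem_belowHalf_Icc_iff P ω hk]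

lemma filter_Icc_half_lt (hk : k ≤ N) :
    (Icc 1 k).filter (fun l => 1/2 < P l ω) = Icc 1 k \ belowHalf P (Icc 1 N) ω := by
  ext l
  by_cases hl : l ∈ Icc 1 k <;> simp [hl, mem_belowHalf_Icc_iff P ω hk]

lemma filter_Icc_mem_and_le_half (H : Finset ℕ) (hk : k ≤ N) :
    (Icc 1 k).filter (fun l => l ∈ H ∧ P l ω ≤ 1/2) = Icc 1 k ∩ belowHalf P (Icc 1 N) ω ∩ H := by
  ext l
  by_cases hl : l ∈ Icc 1 k <;> simp [hl, mem_belowHalf_Icc_iff P ω hk, and_comm]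

lemma knockoffStop_belowHalf (q : ℝ) {K : Finset ℕ} (hK : K ⊆ Icc 1 N) :
    (K.filter fun k => (#((Icc 1 k).filter fun l => 1/2 < P l ω) : ℝ) /
        max (#((Icc 1 k).filter fun l => P l ω ≤ 1/2) : ℝ) 1 ≤ q).sup id =
      knockoffStop q K (belowHalf P (Icc 1 N) ω) := by
  rw [knockoffStop]
  congr 1
  refine filter_congr fun k hk => ?_
  have hkN := (mem_Icc.1 (hK hk)).2
  rw [fdpHat, filter_Icc_half_lt P ω hkN, filter_Icc_le_half P ω hkN]

end Identification

theorem selective_seq_testing_I_general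
    {Ω : Type*} [MeasurableSpace Ω] (μ : Measure Ω) [IsProbabilityMeasure μ]
    (N : ℕ) (P : ℕ → Ω → ℝ) (hmeas : ∀ l, Measurable (P l))
    (H0 : Finset ℕ) (hH0 : H0 ⊆ Finset.Icc 1 N)
    -- null p-values are fair coins on {1/2, 1}
    (hnull : ∀ l ∈ H0, μ {ω | P l ω = 1/2} = 1/2 ∧ μ {ω | P l ω = 1} = 1/2)
    -- null p-values are jointly independent
    (hiid : iIndepFun
      (fun l : {l // l ∈ H0} => P l.1) μ)
    -- null p-values are independent of the non-null p-values
    (hindep : IndepFun (fun ω => fun l : {l // l ∈ H0} => P l.1 ω)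
      (fun ω => fun l : {l // l ∈ Finset.Icc 1 N \ H0} => P l.1 ω) μ)
    (q : ℝ) (hq : q ∈ Set.Icc (0:ℝ) 1)
    (K : Finset ℕ) (hK : K ⊆ Finset.Icc 1 N)
    (khat : Ω → ℕ)
    (hkhat : ∀ ω, khat ω =
      (K.filter (fun k =>
        (((Finset.Icc 1 k).filter (fun l => 1/2 < P l ω)).card : ℝ) /
          (max (((Finset.Icc 1 k).filter (fun l => P l ω ≤ 1/2)).card : ℝ) 1) ≤ q)).sup id)
    (V R : Ω → ℕ)
    (hV : ∀ ω, V ω =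
      ((Finset.Icc 1 (khat ω)).filter (fun l => l ∈ H0 ∧ P l ω ≤ 1/2)).card)
    (hR : ∀ ω, R ω = ((Finset.Icc 1 (khat ω)).filter (fun l => P l ω ≤ 1/2)).card) :
    ∫ ω, (if q = 0 then 0 else (V ω : ℝ) / ((R ω : ℝ) + q⁻¹)) ∂μ ≤ q := by
  obtain rfl | hq₀ := hq.1.eq_or_lt
  · simp
  have hintegrand : ∀ ω, (if q = 0 then 0 else (V ω : ℝ) / ((R ω : ℝ) + q⁻¹)) =
      modifiedFDP q K H0 (belowHalf P H0 ω ∪ belowHalf P (Icc 1 N \ H0) ω) := fun ω => by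
    have hk := knockoffStop_le (q := q) hK (belowHalf P (Icc 1 N) ω)
    rw [if_neg hq₀.ne', hV, hR, hkhat, knockoffStop_belowHalf P ω q hK,
      filter_Icc_mem_and_le_half P ω H0 hk, filter_Icc_le_half P ω hk, belowHalf, belowHalf,
      belowHalf, ← filter_union, union_sdiff_of_subset hH0, modifiedFDP]
  simp only [hintegrand]
  have hzero : 0 ∉ H0 := fun h => by simpa using hH0 h
  refine integral_comp_le_of_uniform_of_indepFun (S := belowHalf P H0)
    (C := belowHalf P (Icc 1 N \ H0)) (f := fun s c => modifiedFDP q K H0 (s ∪ c))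
    (fun ω => mem_powerset.2 (filter_subset _ _)) (fun ω => mem_powerset.2 (filter_subset _ _))
    (fun s hs => measurableSet_belowHalf_preimage hmeas (mem_powerset.1 hs))
    (fun c hc => measurableSet_belowHalf_preimage hmeas (mem_powerset.1 hc))
    (fun s hs => ?_)
    (fun s hs c hc => measureReal_belowHalf_inter_preimage hindep (mem_powerset.1 hs)
      (mem_powerset.1 hc))
    (fun c hc => ?_)
  · rw [card_powerset, measureReal_belowHalf_preimage hiid hmeas
      (fun l hl => measure_le_half_eq_half (hmeas l) (hnull l hl).1 (hnull l hl).2)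
      (mem_powerset.1 hs)]
    norm_num
  · rw [card_powerset]
    push_cast
    exact sum_modifiedFDP_le hq₀ K hzero (disjoint_sdiff.mono_right (mem_powerset.1 hc))

theorem selective_seq_testing_I
    {Ω : Type*} [MeasurableSpace Ω] (μ : Measure Ω) [IsProbabilityMeasure μ]
    (N : ℕ) (P : ℕ → Ω → ℝ) (hmeas : ∀ l, Measurable (P l))
    (hval : ∀ l ∈ Finset.Icc 1 N, ∀ ω, P l ω = 1/2 ∨ P l ω = 1)
    (H0 : Finset ℕ) (hH0 : H0 ⊆ Finset.Icc 1 N)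
    -- null p-values are fair coins on {1/2, 1}
    (hnull : ∀ l ∈ H0, μ {ω | P l ω = 1/2} = 1/2 ∧ μ {ω | P l ω = 1} = 1/2)
    -- null p-values are jointly independent
    (hiid : iIndepFun
      (fun l : {l // l ∈ H0} => P l.1) μ)
    -- null p-values are independent of the non-null p-values
    (hindep : IndepFun (fun ω => fun l : {l // l ∈ H0} => P l.1 ω)
      (fun ω => fun l : {l // l ∈ Finset.Icc 1 N \ H0} => P l.1 ω) μ)
    (q : ℝ) (hq : q ∈ Set.Icc (0:ℝ) 1)
    (K : Finset ℕ) (hK : K ⊆ Finset.Icc 1 N)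
    (khat : Ω → ℕ)
    (hkhat : ∀ ω, khat ω =
      (K.filter (fun k =>
        (((Finset.Icc 1 k).filter (fun l => 1/2 < P l ω)).card : ℝ) /
          (max (((Finset.Icc 1 k).filter (fun l => P l ω ≤ 1/2)).card : ℝ) 1) ≤ q)).sup id)
    (V R : Ω → ℕ)
    (hV : ∀ ω, V ω =
      ((Finset.Icc 1 (khat ω)).filter (fun l => l ∈ H0 ∧ P l ω ≤ 1/2)).card)
    (hR : ∀ ω, R ω = ((Finset.Icc 1 (khat ω)).filter (fun l => P l ω ≤ 1/2)).card) :
    ∫ ω, (if q = 0 then 0 else (V ω : ℝ) / ((R ω : ℝ) + q⁻¹)) ∂μ ≤ q :=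
  selective_seq_testing_I_general μ N P hmeas H0 hH0 hnull hiid hindep q hq K hK khat hkhat V R hV
    hR
end

section
/- Let p₁, …, p_N be random variables taking values in {1/2, 1}, where the null indices form a set H₀, the variables (p_l)_{l ∈ H₀} are i.i.d. with P(p_l = 1/2) = P(p_l = 1) = 1/2, and they are independent of (p_l)_{l ∉ H₀}. For q ∈ [0,1] and a subset K ⊆ {1,…,N}, define k̂₊ = max{k ∈ K : (1 + #{l ≤ k : p_l > 1/2}) / max(#{l ≤ k : p_l ≤ 1/2}, 1) ≤ q} (with k̂₊ = 0 if the set is empty), V₊ = #{l ≤ k̂₊ : l ∈ H₀ and p_l ≤ 1/2}, and R₊ = #{l ≤ k̂₊ : p_l ≤ 1/2}. Then E[V₊ / max(R₊, 1)] ≤ q. -/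
/-!
Encode an outcome by its discovery set `D = {l | p_l ≤ 1/2}` and condition on its non-null part
`G = D \ H₀`: the null part `A = D ∩ H₀` is then a uniformly random subset of `H₀`, so it suffices
to bound the sum of `V₊ / max(R₊, 1)` over all `A ⊆ H₀` by `q · 2^#H₀`.

Write `V(k) = #{l ∈ A | l ≤ k}` and `V⁻(k) = #{l ∈ H₀ \ A | l ≤ k}`. At `k = k̂₊` the selection
rule gives `1 + #{l ≤ k | l ∉ D} ≤ q · max(R₊, 1)`, and the nulls outside `D` are among these
indices, so `V₊ / max(R₊, 1) ≤ q · V(k̂₊) / (1 + V⁻(k̂₊))`.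

Run backwards in `k`, the ratio `V(k) / (1 + V⁻(k))` is a supermartingale: once `V(k + 1)` and
`A ∩ (k + 1, ∞)` are known, `A ∩ [0, k + 1]` is a uniform subset of its size, and dropping the index
`k + 1` lowers the mean of the ratio. Since `{k̂₊ ≤ k}` only depends on that information, optional
stopping compares the sum at `k̂₊` with the sum at `k = ∞`, namely
`∑ⱼ C(n, j) · j / (n - j + 1) = 2ⁿ - 1`.
-/

open scoped Classical
open MeasureTheory ProbabilityTheory Finset
open scoped ENNReal

namespace Finset

theorem card_filter_notMem_powersetCard_mul {α : Type*} [DecidableEq α] {U : Finset α} {t : α}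
    (ht : t ∈ U) (j : ℕ) :
    #((U.powersetCard j).filter (t ∉ ·)) * j = #((U.powersetCard j).filter (t ∈ ·)) * (#U - j) := by
  have hnot : (U.powersetCard j).filter (t ∉ ·) = (U.erase t).powersetCard j := by
    ext B; simp only [mem_filter, mem_powersetCard, subset_erase]; tauto
  rcases j with _ | i
  · simp
  have hmem : (U.powersetCard (i + 1)).filter (t ∈ ·)
      = (U.powersetCard (i + 1)).filter ({t} ⊆ ·) := by
    simp only [singleton_subset_iff]
  rw [hnot, hmem, card_filter_powersetCard_subset _ _ _ (singleton_subset_iff.mpr ht) (by simp),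
    card_powersetCard, card_erase_of_mem ht, card_singleton, Nat.add_sub_cancel,
    Nat.choose_succ_right_eq, Nat.sub_sub, Nat.add_comm 1]

theorem sum_powersetCard_card_erase_div_le {α : Type*} [DecidableEq α] (U : Finset α) (t : α)
    (j : ℕ) :
    ∑ B ∈ U.powersetCard j, (#(B.erase t) : ℝ) / (1 + #((U \ B).erase t))
      ≤ ∑ B ∈ U.powersetCard j, (#B : ℝ) / (1 + #(U \ B)) := by
  by_cases ht : t ∈ U
  swap
  · refine sum_le_sum fun B hB => ?_
    have htB : t ∉ B := fun h => ht ((mem_powersetCard.mp hB).1 h)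
    rw [erase_eq_of_notMem htB, erase_eq_of_notMem fun h => ht (mem_sdiff.mp h).1]
  set d := #U - j
  have hcompl : ∀ B ∈ U.powersetCard j, #(U \ B) = d := fun B hB => by
    obtain ⟨hBU, hBj⟩ := mem_powersetCard.mp hB
    rw [card_sdiff_of_subset hBU, hBj]
  set a := #((U.powersetCard j).filter (t ∈ ·))
  set b := #((U.powersetCard j).filter (t ∉ ·))
  have hL : ∑ B ∈ U.powersetCard j, (#(B.erase t) : ℝ) / (1 + #((U \ B).erase t))
      = a * ((j - 1) / (1 + d)) + b * (j / d) := by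
    rw [← sum_filter_add_sum_filter_not _ (t ∈ ·)]
    congr 1 <;> rw [← nsmul_eq_mul, ← sum_const] <;> refine sum_congr rfl fun B hB => ?_ <;>
      obtain ⟨hB, htB⟩ := mem_filter.mp hB
    · rw [erase_eq_of_notMem fun h => (mem_sdiff.mp h).2 htB, hcompl B hB,
        cast_card_erase_of_mem htB, (mem_powersetCard.mp hB).2]
    · rw [erase_eq_of_notMem htB, cast_card_erase_of_mem (mem_sdiff.mpr ⟨ht, htB⟩), hcompl B hB,
        (mem_powersetCard.mp hB).2]
      ring_nf
  have hR : ∑ B ∈ U.powersetCard j, (#B : ℝ) / (1 + #(U \ B)) = (a + b) * (j / (1 + d)) := by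
    rw [← Nat.cast_add, card_filter_add_card_filter_not, ← nsmul_eq_mul, ← sum_const]
    refine sum_congr rfl fun B hB => ?_
    rw [hcompl B hB, (mem_powersetCard.mp hB).2]
  rw [hL, hR]
  rcases Nat.eq_zero_or_pos b with hb | hb
  · rw [hb, Nat.cast_zero, zero_mul, add_zero, add_zero]
    gcongr
    linarith
  obtain ⟨B, hB⟩ := card_pos.mp hb
  obtain ⟨hB, htB⟩ := mem_filter.mp hB
  have hd : (0 : ℝ) < d := by
    rw [← hcompl B hB]
    exact_mod_cast card_pos.mpr ⟨t, mem_sdiff.mpr ⟨ht, htB⟩⟩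
  have hswap : (b * j : ℝ) = a * d := by exact_mod_cast card_filter_notMem_powersetCard_mul ht j
  rw [← mul_div_assoc (b : ℝ), hswap]
  field_simp
  linarith

theorem sum_powerset_eq_sum_sum_union {α M : Type*} [DecidableEq α] [AddCommMonoid M]
    (S : Finset α) (p : α → Prop) [DecidablePred p] (f : Finset α → M) :
    ∑ A ∈ S.powerset, f A
      = ∑ C ∈ (S.filter (¬ p ·)).powerset, ∑ B ∈ (S.filter p).powerset, f (B ∪ C) := by
  rw [← sum_product']
  refine sum_nbij' (fun A => (A.filter (¬ p ·), A.filter p)) (fun CB => CB.2 ∪ CB.1)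
    (fun A hA => ?_) (fun CB hCB => ?_) (fun A _ => filter_union_filter_not_eq p A)
    (fun CB hCB => ?_) (fun A _ => by rw [filter_union_filter_not_eq])
  · simp only [mem_product, mem_powerset] at hA ⊢
    exact ⟨filter_subset_filter _ hA, filter_subset_filter _ hA⟩
  · simp only [mem_product, mem_powerset] at hCB ⊢
    exact union_subset (hCB.2.trans (filter_subset _ _)) (hCB.1.trans (filter_subset _ _))
  · simp only [mem_product, mem_powerset, subset_iff, mem_filter] at hCB
    ext x <;> simp only [mem_filter, mem_union] <;> grind

theorem sum_powerset_card_div_le {α : Type*} [DecidableEq α] (S : Finset α) :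
    ∑ A ∈ S.powerset, (#A : ℝ) / (1 + #(S \ A)) ≤ 2 ^ #S := by
  set n := #S
  have hterm : ∀ i ∈ range n, (n.choose (i + 1) : ℝ) * ((i + 1 : ℕ) / (1 + (n - (i + 1) : ℕ)))
      = n.choose i := fun i hi => by
    have hi : i < n := mem_range.mp hi
    have hden : (1 + (n - (i + 1) : ℕ) : ℝ) = (n - i : ℕ) := by
      rw [← Nat.cast_one, ← Nat.cast_add]; congr 1; omega
    have hpos : ((n - i : ℕ) : ℝ) ≠ 0 := Nat.cast_ne_zero.mpr (by omega)
    rw [hden, ← mul_div_assoc, ← Nat.cast_mul, Nat.choose_succ_right_eq, Nat.cast_mul,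
      mul_div_assoc, div_self hpos, mul_one]
  calc ∑ A ∈ S.powerset, (#A : ℝ) / (1 + #(S \ A))
      = ∑ A ∈ S.powerset, (#A : ℝ) / (1 + (n - #A : ℕ)) :=
        sum_congr rfl fun A hA => by rw [card_sdiff_of_subset (mem_powerset.mp hA)]
    _ = ∑ i ∈ range n, (n.choose i : ℝ) := by
        rw [sum_powerset_apply_card (fun j => (j : ℝ) / (1 + (n - j : ℕ))), sum_range_succ',
          sum_congr rfl (by simpa only [nsmul_eq_mul] using hterm)]
        simp [n]
    _ ≤ ∑ i ∈ range (n + 1), (n.choose i : ℝ) :=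
        sum_le_sum_of_subset_of_nonneg (range_subset_range.mpr n.le_succ) fun _ _ _ => by positivity
    _ = 2 ^ n := by exact_mod_cast Nat.sum_range_choose n

theorem card_filter_le_eq_of_filter_lt_eq {A A' : Finset ℕ} {m j : ℕ}
    (hlow : #(A.filter (· ≤ m)) = #(A'.filter (· ≤ m)))
    (hhigh : A.filter (m < ·) = A'.filter (m < ·)) (hmj : m ≤ j) :
    #(A.filter (· ≤ j)) = #(A'.filter (· ≤ j)) := by
  have hsplit : ∀ X : Finset ℕ,
      #(X.filter (· ≤ j)) = #(X.filter (· ≤ m)) + #((X.filter (m < ·)).filter (· ≤ j)) := by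
    intro X
    rw [← card_union_of_disjoint]
    · congr 1
      ext x; simp only [mem_filter, mem_union]; grind
    · exact disjoint_left.mpr fun x hx hx' => by simp only [mem_filter] at hx hx'; omega
  rw [hsplit A, hsplit A', hlow, hhigh]

theorem card_Icc_inter_eq_card_filter_le {A : Finset ℕ} (hA : 0 ∉ A) (k : ℕ) :
    #(Icc 1 k ∩ A) = #(A.filter (· ≤ k)) := by
  congr 1
  ext x
  simp only [mem_inter, mem_Icc, mem_filter]
  constructor
  · rintro ⟨⟨-, hxk⟩, hx⟩; exact ⟨hx, hxk⟩
  · rintro ⟨hx, hxk⟩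
    exact ⟨⟨Nat.one_le_iff_ne_zero.mpr fun h => hA (h ▸ hx), hxk⟩, hx⟩

theorem filter_union_of_forall_le_of_forall_lt {B C : Finset ℕ} {m : ℕ} (hB : ∀ x ∈ B, x ≤ m)
    (hC : ∀ x ∈ C, m < x) : (B ∪ C).filter (· ≤ m) = B ∧ (B ∪ C).filter (m < ·) = C := by
  constructor <;> ext x <;> simp only [mem_filter, mem_union] <;> grind

theorem Icc_inter_filter_Icc {N k : ℕ} (hk : k ≤ N) (r : ℕ → Prop) [DecidablePred r] :
    Icc 1 k ∩ (Icc 1 N).filter r = (Icc 1 k).filter r := by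
  ext l; simp only [mem_inter, mem_filter, mem_Icc]; grind

theorem Icc_sdiff_filter_Icc {N k : ℕ} (hk : k ≤ N) (r : ℕ → Prop) [DecidablePred r] :
    Icc 1 k \ (Icc 1 N).filter r = (Icc 1 k).filter (¬ r ·) := by
  ext l; simp only [mem_sdiff, mem_filter, mem_Icc]; grind

end Finset

namespace SelectiveSeqTesting

/-- `V(k) / (1 + V⁻(k))` for the nulls `S` and the null discoveries `A`. -/
noncomputable def nullRatio (S A : Finset ℕ) (k : ℕ) : ℝ :=
  #(A.filter (· ≤ k)) / (1 + #((S \ A).filter (· ≤ k)))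

theorem nullRatio_eq_sdiff (S A : Finset ℕ) (k : ℕ) :
    nullRatio S A k = #(A.filter (· ≤ k)) / (1 + #(S.filter (· ≤ k) \ A.filter (· ≤ k))) := by
  rw [nullRatio]
  congr 4
  ext; simp only [mem_filter, mem_sdiff]; tauto

theorem nullRatio_eq_erase (S A : Finset ℕ) (k : ℕ) :
    nullRatio S A k = #((A.filter (· ≤ k + 1)).erase (k + 1)) /
      (1 + #((S.filter (· ≤ k + 1) \ A.filter (· ≤ k + 1)).erase (k + 1))) := by
  rw [nullRatio]
  congr 4 <;> ext <;> simp only [mem_filter, mem_erase, mem_sdiff] <;> grind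

theorem nullRatio_of_forall_le {S A : Finset ℕ} {k : ℕ} (hA : A ⊆ S) (hk : ∀ a ∈ S, a ≤ k) :
    nullRatio S A k = #A / (1 + #(S \ A)) := by
  rw [nullRatio, filter_true_of_mem fun a ha => hk a (hA ha),
    filter_true_of_mem fun a ha => hk a (mem_sdiff.mp ha).1]

def IsReverseStoppingTime (S : Finset ℕ) (T : Finset ℕ → ℕ) : Prop :=
  ∀ k, ∀ A ⊆ S, ∀ A' ⊆ S, #(A.filter (· ≤ k + 1)) = #(A'.filter (· ≤ k + 1)) →
    A.filter (k + 1 < ·) = A'.filter (k + 1 < ·) → (T A ≤ k ↔ T A' ≤ k)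

theorem sum_nullRatio_max_le_succ {S : Finset ℕ} {T : Finset ℕ → ℕ}
    (hT : IsReverseStoppingTime S T) (k : ℕ) :
    ∑ A ∈ S.powerset, nullRatio S A (max (T A) k)
      ≤ ∑ A ∈ S.powerset, nullRatio S A (max (T A) (k + 1)) := by
  set S₁ := S.filter (· ≤ k + 1)
  rw [sum_powerset_eq_sum_sum_union S (· ≤ k + 1), sum_powerset_eq_sum_sum_union S (· ≤ k + 1)]
  refine sum_le_sum fun C hC => ?_
  rw [sum_powerset, sum_powerset]
  refine sum_le_sum fun j _ => ?_
  have hC' : ∀ x ∈ C, k + 1 < x := fun x hx => not_le.mp (mem_filter.mp (mem_powerset.mp hC hx)).2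
  have hsplit : ∀ B ∈ S₁.powersetCard j,
      (B ∪ C).filter (· ≤ k + 1) = B ∧ (B ∪ C).filter (k + 1 < ·) = C := fun B hB =>
    filter_union_of_forall_le_of_forall_lt
      (fun x hx => (mem_filter.mp ((mem_powersetCard.mp hB).1 hx)).2) hC'
  have hevent : ∀ B ∈ S₁.powersetCard j, ∀ B' ∈ S₁.powersetCard j,
      (T (B ∪ C) ≤ k ↔ T (B' ∪ C) ≤ k) := by
    have hsub : ∀ B ∈ S₁.powersetCard j, B ∪ C ⊆ S := fun B hB =>
      union_subset ((mem_powersetCard.mp hB).1.trans (filter_subset _ _))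
        ((mem_powerset.mp hC).trans (filter_subset _ _))
    intro B hB B' hB'
    refine hT k _ (hsub B hB) _ (hsub B' hB') ?_ ((hsplit B hB).2.trans (hsplit B' hB').2.symm)
    rw [(hsplit B hB).1, (hsplit B' hB').1, (mem_powersetCard.mp hB).2, (mem_powersetCard.mp hB').2]
  by_cases hstop : ∀ B ∈ S₁.powersetCard j, T (B ∪ C) ≤ k
  · calc ∑ B ∈ S₁.powersetCard j, nullRatio S (B ∪ C) (max (T (B ∪ C)) k)
        = ∑ B ∈ S₁.powersetCard j, (#(B.erase (k + 1)) : ℝ) / (1 + #((S₁ \ B).erase (k + 1))) :=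
          sum_congr rfl fun B hB => by
            rw [max_eq_right (hstop B hB), nullRatio_eq_erase, (hsplit B hB).1]
      _ ≤ ∑ B ∈ S₁.powersetCard j, (#B : ℝ) / (1 + #(S₁ \ B)) :=
          sum_powersetCard_card_erase_div_le S₁ (k + 1) j
      _ = ∑ B ∈ S₁.powersetCard j, nullRatio S (B ∪ C) (max (T (B ∪ C)) (k + 1)) :=
          sum_congr rfl fun B hB => by
            rw [max_eq_right ((hstop B hB).trans (k.le_add_right 1)), nullRatio_eq_sdiff,
              (hsplit B hB).1]
  · push Not at hstop
    obtain ⟨B₀, hB₀, hlate₀⟩ := hstop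
    refine le_of_eq (sum_congr rfl fun B hB => ?_)
    have hlate : k < T (B ∪ C) := not_le.mp fun h => hlate₀.not_ge ((hevent B hB B₀ hB₀).mp h)
    rw [max_eq_left hlate.le, max_eq_left hlate]

theorem sum_nullRatio_le_two_pow {S : Finset ℕ} {T : Finset ℕ → ℕ}
    (hT : IsReverseStoppingTime S T) :
    ∑ A ∈ S.powerset, nullRatio S A (T A) ≤ 2 ^ #S := by
  have hmono : Monotone fun k => ∑ A ∈ S.powerset, nullRatio S A (max (T A) k) :=
    monotone_nat_of_le_succ (sum_nullRatio_max_le_succ hT)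
  calc ∑ A ∈ S.powerset, nullRatio S A (T A)
      = ∑ A ∈ S.powerset, nullRatio S A (max (T A) 0) := by simp only [Nat.max_zero]
    _ ≤ ∑ A ∈ S.powerset, nullRatio S A (max (T A) (S.sup id)) := hmono (Nat.zero_le _)
    _ = ∑ A ∈ S.powerset, (#A : ℝ) / (1 + #(S \ A)) :=
        sum_congr rfl fun A hA => nullRatio_of_forall_le (mem_powerset.mp hA) fun a ha =>
          (le_sup (f := id) ha).trans (le_max_right _ _)
    _ ≤ 2 ^ #S := sum_powerset_card_div_le S

/-- `k̂₊` for the discovery set `D = {l | p_l ≤ 1/2}`. -/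
noncomputable def kPlus (K : Finset ℕ) (q : ℝ) (D : Finset ℕ) : ℕ :=
  (K.filter fun k => (1 + #(Icc 1 k \ D) : ℝ) / max (#(Icc 1 k ∩ D) : ℝ) 1 ≤ q).sup id

/-- `V₊ / max(R₊, 1)` for the discovery set `D`. -/
noncomputable def fdp (H0 K : Finset ℕ) (q : ℝ) (D : Finset ℕ) : ℝ :=
  #(Icc 1 (kPlus K q D) ∩ (D ∩ H0)) / max (#(Icc 1 (kPlus K q D) ∩ D) : ℝ) 1

theorem kPlus_le {N : ℕ} {K : Finset ℕ} (hK : K ⊆ Icc 1 N) (q : ℝ) (D : Finset ℕ) :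
    kPlus K q D ≤ N :=
  Finset.sup_le fun _ hk => (mem_Icc.mp (hK (mem_filter.mp hk).1)).2

theorem kPlus_le_iff_of_card_inter_eq {K : Finset ℕ} {q : ℝ} {D D' : Finset ℕ} {k : ℕ}
    (h : ∀ j ∈ K, k < j → #(Icc 1 j ∩ D) = #(Icc 1 j ∩ D')) :
    kPlus K q D ≤ k ↔ kPlus K q D' ≤ k := by
  have hsdiff : ∀ j (E : Finset ℕ), #(Icc 1 j \ E) = j - #(Icc 1 j ∩ E) := fun j E => by
    have := card_sdiff_add_card_inter (Icc 1 j) E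
    rw [Nat.card_Icc] at this; omega
  simp only [kPlus, Finset.sup_le_iff, mem_filter, id]
  refine forall_congr' fun j => ?_
  rcases le_or_gt j k with hjk | hkj
  · simp only [hjk, implies_true]
  · refine imp_congr_left (and_congr_right fun hj => ?_)
    rw [hsdiff, hsdiff, h j hj hkj]

theorem isReverseStoppingTime_kPlus_union (K : Finset ℕ) (q : ℝ) {H0 G : Finset ℕ}
    (h0 : 0 ∉ H0) (hG : Disjoint H0 G) :
    IsReverseStoppingTime H0 fun A => kPlus K q (A ∪ G) := by
  intro k A hA A' hA' hlow hhigh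
  refine kPlus_le_iff_of_card_inter_eq fun j _ hkj => ?_
  have hcount : ∀ B ⊆ H0, #(Icc 1 j ∩ (B ∪ G)) = #(B.filter (· ≤ j)) + #(Icc 1 j ∩ G) :=
    fun B hB => by
      rw [inter_union_distrib_left, card_union_of_disjoint
        ((disjoint_of_subset_left hB hG).mono inter_subset_right inter_subset_right),
        card_Icc_inter_eq_card_filter_le fun h => h0 (hB h)]
  rw [hcount A hA, hcount A' hA', card_filter_le_eq_of_filter_lt_eq hlow hhigh hkj]

theorem fdp_union_le {K H0 G A : Finset ℕ} {q : ℝ} (hq : 0 ≤ q) (h0 : 0 ∉ H0)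
    (hG : Disjoint H0 G) (hA : A ⊆ H0) :
    fdp H0 K q (A ∪ G) ≤ q * nullRatio H0 A (kPlus K q (A ∪ G)) := by
  set k := kPlus K q (A ∪ G) with hk
  have hnull : (A ∪ G) ∩ H0 = A := by
    rw [union_inter_distrib_right, inter_eq_left.mpr hA,
      disjoint_iff_inter_eq_empty.mp hG.symm, union_empty]
  have hV : #(Icc 1 k ∩ ((A ∪ G) ∩ H0)) = #(A.filter (· ≤ k)) := by
    rw [hnull, card_Icc_inter_eq_card_filter_le fun h => h0 (hA h)]
  have hratio : 0 ≤ nullRatio H0 A k := by unfold nullRatio; positivity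
  rcases (K.filter fun k => (1 + #(Icc 1 k \ (A ∪ G)) : ℝ) /
      max (#(Icc 1 k ∩ (A ∪ G)) : ℝ) 1 ≤ q).eq_empty_or_nonempty with hnone | hsome
  · have hk0 : k = 0 := by rw [hk, kPlus, hnone, sup_empty]; rfl
    rw [fdp, ← hk, hk0, Icc_eq_empty (by omega), empty_inter, card_empty, Nat.cast_zero, zero_div]
    exact mul_nonneg hq (hk0 ▸ hratio)
  obtain ⟨k', hk', hsup⟩ := exists_mem_eq_sup _ hsome id
  have hcond : (1 + #(Icc 1 k \ (A ∪ G)) : ℝ) / max (#(Icc 1 k ∩ (A ∪ G)) : ℝ) 1 ≤ q := by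
    rw [hk, kPlus, hsup]; exact (mem_filter.mp hk').2
  have hfalse : #((H0 \ A).filter (· ≤ k)) ≤ #(Icc 1 k \ (A ∪ G)) := by
    rw [← card_Icc_inter_eq_card_filter_le fun h => h0 (mem_sdiff.mp h).1]
    refine card_le_card fun x hx => ?_
    simp only [mem_inter, mem_sdiff, mem_union] at hx ⊢
    exact ⟨hx.1, fun h => h.elim hx.2.2 fun hxG => disjoint_left.mp hG hx.2.1 hxG⟩
  rw [fdp, ← hk, hV, nullRatio]
  set r : ℝ := max (#(Icc 1 k ∩ (A ∪ G)) : ℝ) 1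
  have hr : 0 < r := lt_of_lt_of_le one_pos (le_max_right _ _)
  set v : ℝ := ((#(A.filter (· ≤ k)) : ℕ) : ℝ)
  set d : ℝ := ((#((H0 \ A).filter (· ≤ k)) : ℕ) : ℝ)
  have hd : 0 < 1 + d := by positivity
  calc v / r = (1 + d) / r * (v / (1 + d)) := by field_simp
    _ ≤ (1 + #(Icc 1 k \ (A ∪ G))) / r * (v / (1 + d)) := by gcongr; exact Nat.cast_le.mpr hfalse
    _ ≤ q * (v / (1 + d)) := by gcongr

theorem sum_powerset_fdp_union_le (K : Finset ℕ) {H0 G : Finset ℕ} {q : ℝ} (hq : 0 ≤ q)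
    (h0 : 0 ∉ H0) (hG : Disjoint H0 G) :
    ∑ A ∈ H0.powerset, fdp H0 K q (A ∪ G) ≤ q * 2 ^ #H0 :=
  calc ∑ A ∈ H0.powerset, fdp H0 K q (A ∪ G)
      ≤ ∑ A ∈ H0.powerset, q * nullRatio H0 A (kPlus K q (A ∪ G)) :=
        sum_le_sum fun _ hA => fdp_union_le hq h0 hG (mem_powerset.mp hA)
    _ = q * ∑ A ∈ H0.powerset, nullRatio H0 A (kPlus K q (A ∪ G)) := (mul_sum ..).symm
    _ ≤ q * 2 ^ #H0 := mul_le_mul_of_nonneg_left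
        (sum_nullRatio_le_two_pow (isReverseStoppingTime_kPlus_union K q h0 hG)) hq

theorem kPlus_filter_Icc {N : ℕ} {K : Finset ℕ} (hK : K ⊆ Icc 1 N) (q : ℝ) (p : ℕ → ℝ) (c : ℝ) :
    kPlus K q ((Icc 1 N).filter (p · ≤ c)) = (K.filter fun k =>
      (1 + #((Icc 1 k).filter (c < p ·)) : ℝ) / max (#((Icc 1 k).filter (p · ≤ c)) : ℝ) 1 ≤ q).sup
        id := by
  refine congrArg (sup · id) (filter_congr fun k hk => ?_)
  have hkN := (mem_Icc.mp (hK hk)).2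
  simp only [Icc_inter_filter_Icc hkN, Icc_sdiff_filter_Icc hkN, not_le]

theorem fdp_filter_Icc {N : ℕ} {K : Finset ℕ} (hK : K ⊆ Icc 1 N) (H0 : Finset ℕ) (q : ℝ)
    (p : ℕ → ℝ) (c : ℝ) :
    fdp H0 K q ((Icc 1 N).filter (p · ≤ c))
      = #((Icc 1 (kPlus K q ((Icc 1 N).filter (p · ≤ c)))).filter fun l => l ∈ H0 ∧ p l ≤ c) /
        max (#((Icc 1 (kPlus K q ((Icc 1 N).filter (p · ≤ c)))).filter (p · ≤ c)) : ℝ) 1 := by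
  have hkN := kPlus_le hK q ((Icc 1 N).filter (p · ≤ c))
  rw [fdp, ← inter_assoc, Icc_inter_filter_Icc hkN]
  congr 4
  ext l
  simp only [mem_inter, mem_filter]
  tauto

def trueSet {α : Type*} (s : Finset α) (ε : s → Bool) : Finset α :=
  (univ.filter fun i => ε i = true).map (Function.Embedding.subtype _)

theorem mem_trueSet {α : Type*} {s : Finset α} {ε : s → Bool} {a : α} :
    a ∈ trueSet s ε ↔ ∃ h : a ∈ s, ε ⟨a, h⟩ = true := by
  simp [trueSet]

theorem trueSet_subset {α : Type*} (s : Finset α) (ε : s → Bool) : trueSet s ε ⊆ s :=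
  fun _ ha => (mem_trueSet.mp ha).1

theorem trueSet_union_trueSet_sdiff {α : Type*} [DecidableEq α] {s t : Finset α} (hts : t ⊆ s)
    (r : α → Prop) [DecidablePred r] :
    trueSet t (fun l => decide (r l)) ∪ trueSet (s \ t) (fun l => decide (r l)) = s.filter r := by
  ext a
  simp only [mem_union, mem_trueSet, mem_filter, mem_sdiff, decide_eq_true_eq, exists_prop]
  have := @hts a
  tauto

theorem sum_trueSet_eq_sum_powerset {α M : Type*} [DecidableEq α] [AddCommMonoid M] (s : Finset α)
    (f : Finset α → M) : ∑ ε : s → Bool, f (trueSet s ε) = ∑ A ∈ s.powerset, f A := by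
  refine sum_nbij' (fun ε => trueSet s ε) (fun A i => decide (i.1 ∈ A)) (fun ε _ => ?_)
    (fun _ _ => mem_univ _) (fun ε _ => ?_) (fun A hA => ?_) (fun _ _ => rfl)
  · exact mem_powerset.mpr (trueSet_subset s ε)
  · funext i; simp [mem_trueSet]
  · ext a; simp only [mem_trueSet, decide_eq_true_eq]
    exact ⟨fun ⟨_, h⟩ => h, fun h => ⟨mem_powerset.mp hA h, h⟩⟩

theorem measurable_decide_le (c : ℝ) : Measurable fun r : ℝ => decide (r ≤ c) :=
  measurable_to_bool (by
    rw [show (fun r : ℝ => decide (r ≤ c)) ⁻¹' {true} = Set.Iic c by ext; simp]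
    exact measurableSet_Iic)

theorem measurable_pi_decide_le {ι : Type*} (c : ℝ) :
    Measurable fun (v : ι → ℝ) (i : ι) => decide (v i ≤ c) :=
  measurable_pi_lambda _ fun i => (measurable_decide_le c).comp (measurable_pi_apply i)

section Probability

variable {Ω : Type*} [MeasurableSpace Ω] {μ : Measure Ω}

theorem measure_eq_inv_two_of_le [IsProbabilityMeasure μ] {s : Set Ω} (hs : MeasurableSet s)
    (h : 2⁻¹ ≤ μ s) (hc : 2⁻¹ ≤ μ sᶜ) : μ s = 2⁻¹ := by
  refine le_antisymm ?_ h
  rw [← compl_compl s, prob_compl_eq_one_sub hs.compl, ← ENNReal.one_sub_inv_two]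
  exact tsub_le_tsub_left hc 1

theorem measure_preimage_decide_le_eq_inv_two [IsProbabilityMeasure μ] {Z : Ω → ℝ}
    (hZ : Measurable Z) {a b c : ℝ} (hac : a ≤ c) (hcb : c < b)
    (ha : μ {ω | Z ω = a} = 1/2) (hb : μ {ω | Z ω = b} = 1/2) (β : Bool) :
    μ ((fun ω => decide (Z ω ≤ c)) ⁻¹' {β}) = 2⁻¹ := by
  have hs : MeasurableSet {ω | Z ω ≤ c} := measurableSet_le hZ measurable_const
  have hle : 2⁻¹ ≤ μ {ω | Z ω ≤ c} := by
    rw [← one_div, ← ha]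
    exact measure_mono fun ω (h : Z ω = a) => h.trans_le hac
  have hgt : 2⁻¹ ≤ μ {ω | Z ω ≤ c}ᶜ := by
    rw [← one_div, ← hb]
    exact measure_mono fun ω (h : Z ω = b) (h' : Z ω ≤ c) => (h ▸ hcb).not_ge h'
  cases β
  · rw [show (fun ω => decide (Z ω ≤ c)) ⁻¹' {false} = {ω | Z ω ≤ c}ᶜ by ext; simp]
    exact measure_eq_inv_two_of_le hs.compl hgt (by rwa [compl_compl])
  · rw [show (fun ω => decide (Z ω ≤ c)) ⁻¹' {true} = {ω | Z ω ≤ c} by ext; simp]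
    exact measure_eq_inv_two_of_le hs hle hgt

theorem measure_preimage_pi_singleton_of_iIndepFun {ι β : Type*} [Fintype ι]
    [MeasurableSpace β] [MeasurableSingletonClass β] {X : ι → Ω → β} (hX : iIndepFun X μ)
    {p : ℝ≥0∞} (hp : ∀ i b, μ (X i ⁻¹' {b}) = p) (ε : ι → β) :
    μ ((fun ω i => X i ω) ⁻¹' {ε}) = p ^ Fintype.card ι := by
  have hset : (fun ω i => X i ω) ⁻¹' {ε} = ⋂ i, X i ⁻¹' {ε i} := by
    ext ω; simp [funext_iff]
  rw [hset, hX.meas_iInter fun i => ⟨{ε i}, measurableSet_singleton _, rfl⟩]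
  simp only [hp, prod_const, card_univ]

theorem integral_comp_le_of_indepFun [IsProbabilityMeasure μ] {α β : Type*} [Fintype α]
    [MeasurableSpace α] [MeasurableSingletonClass α] [Fintype β] [MeasurableSpace β]
    [MeasurableSingletonClass β] {X : Ω → α} {Y : Ω → β} (hX : Measurable X) (hY : Measurable Y)
    (hXY : IndepFun X Y μ) {p : ℝ≥0∞} (hp : ∀ a, μ (X ⁻¹' {a}) = p) (f : α → β → ℝ) {c : ℝ}
    (hc : ∀ b, ∑ a, f a b ≤ c) :
    ∫ ω, f (X ω) (Y ω) ∂μ ≤ p.toReal * c := by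
  have hmap : μ.map (fun ω => (X ω, Y ω)) = (μ.map X).prod (μ.map Y) :=
    (indepFun_iff_map_prod_eq_prod_map_map hX.aemeasurable hY.aemeasurable).mp hXY
  have hinner : ∀ b, ∫ a, f a b ∂μ.map X = p.toReal * ∑ a, f a b := fun b => by
    rw [integral_fintype Integrable.of_finite, mul_sum]
    refine sum_congr rfl fun a _ => ?_
    rw [smul_eq_mul, measureReal_def, Measure.map_apply hX (measurableSet_singleton a), hp]
  have := Measure.isProbabilityMeasure_map (μ := μ) hY.aemeasurable
  calc ∫ ω, f (X ω) (Y ω) ∂μ = ∫ z, f z.1 z.2 ∂μ.map fun ω => (X ω, Y ω) :=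
        (integral_map (hX.prodMk hY).aemeasurable
          (Measurable.of_discrete (f := fun z : α × β => f z.1 z.2)).aestronglyMeasurable).symm
    _ = ∫ b, ∫ a, f a b ∂μ.map X ∂μ.map Y := by
        rw [hmap, integral_prod_symm _ Integrable.of_finite]
    _ ≤ ∫ _, p.toReal * c ∂μ.map Y := by
        refine integral_mono Integrable.of_finite (integrable_const _) fun b => ?_
        rw [hinner]
        exact mul_le_mul_of_nonneg_left (hc b) ENNReal.toReal_nonneg
    _ = p.toReal * c := by simp

end Probability

end SelectiveSeqTesting

open SelectiveSeqTesting

theorem selective_seq_testing_II_general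
    {Ω : Type*} [MeasurableSpace Ω] (μ : Measure Ω) [IsProbabilityMeasure μ]
    (N : ℕ) (P : ℕ → Ω → ℝ) (hmeas : ∀ l, Measurable (P l))
    (H0 : Finset ℕ) (hH0 : H0 ⊆ Finset.Icc 1 N)
    -- null p-values are fair coins on {1/2, 1}
    (hnull : ∀ l ∈ H0, μ {ω | P l ω = 1/2} = 1/2 ∧ μ {ω | P l ω = 1} = 1/2)
    -- null p-values are jointly independent
    (hiid : iIndepFun (m := fun _ : {l // l ∈ H0} => (inferInstance : MeasurableSpace ℝ))
      (fun l : {l // l ∈ H0} => P l.1) μ)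
    -- null p-values are independent of the non-null p-values
    (hindep : IndepFun (fun ω => fun l : {l // l ∈ H0} => P l.1 ω)
      (fun ω => fun l : {l // l ∈ Finset.Icc 1 N \ H0} => P l.1 ω) μ)
    (q : ℝ) (hq : q ∈ Set.Icc (0:ℝ) 1)
    (K : Finset ℕ) (hK : K ⊆ Finset.Icc 1 N)
    (khat : Ω → ℕ)
    (hkhat : ∀ ω, khat ω =
      (K.filter (fun k =>
        (1 + (((Finset.Icc 1 k).filter (fun l => 1/2 < P l ω)).card : ℝ)) /
          (max (((Finset.Icc 1 k).filter (fun l => P l ω ≤ 1/2)).card : ℝ) 1) ≤ q)).sup id)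
    (V R : Ω → ℕ)
    (hV : ∀ ω, V ω =
      ((Finset.Icc 1 (khat ω)).filter (fun l => l ∈ H0 ∧ P l ω ≤ 1/2)).card)
    (hR : ∀ ω, R ω = ((Finset.Icc 1 (khat ω)).filter (fun l => P l ω ≤ 1/2)).card) :
    ∫ ω, (V ω : ℝ) / (max (R ω : ℝ) 1) ∂μ ≤ q := by
  let X : Ω → (H0 → Bool) := fun ω l => decide (P l ω ≤ 1/2)
  let Y : Ω → (↥(Icc 1 N \ H0) → Bool) := fun ω l => decide (P l ω ≤ 1/2)
  have hfdp : ∀ ω, (V ω : ℝ) / max (R ω : ℝ) 1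
      = fdp H0 K q (trueSet H0 (X ω) ∪ trueSet (Icc 1 N \ H0) (Y ω)) := fun ω => by
    rw [hV ω, hR ω, hkhat ω, ← kPlus_filter_Icc hK, ← fdp_filter_Icc hK,
      ← trueSet_union_trueSet_sdiff hH0]
  have hunif : ∀ ε, μ (X ⁻¹' {ε}) = 2⁻¹ ^ #H0 := fun ε =>
    (measure_preimage_pi_singleton_of_iIndepFun (hiid.comp _ fun _ => measurable_decide_le _)
      (fun l => measure_preimage_decide_le_eq_inv_two (hmeas l) le_rfl one_half_lt_one
        (hnull l l.2).1 (hnull l l.2).2) ε).trans (congrArg _ (Fintype.card_coe H0))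
  have hbound : ∀ y, ∑ ε, fdp H0 K q (trueSet H0 ε ∪ trueSet (Icc 1 N \ H0) y) ≤ q * 2 ^ #H0 :=
    fun y => by
      rw [sum_trueSet_eq_sum_powerset H0 fun A => fdp H0 K q (A ∪ trueSet _ y)]
      exact sum_powerset_fdp_union_le K hq.1 (fun h => by simpa using hH0 h)
        (disjoint_sdiff.mono_right (trueSet_subset _ y))
  calc ∫ ω, (V ω : ℝ) / max (R ω : ℝ) 1 ∂μ
      = ∫ ω, fdp H0 K q (trueSet H0 (X ω) ∪ trueSet _ (Y ω)) ∂μ := by simp only [hfdp]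
    _ ≤ (2⁻¹ ^ #H0 : ℝ≥0∞).toReal * (q * 2 ^ #H0) :=
        integral_comp_le_of_indepFun (X := X) (Y := Y)
          ((measurable_pi_decide_le _).comp (measurable_pi_lambda _ fun l => hmeas l))
          ((measurable_pi_decide_le _).comp (measurable_pi_lambda _ fun l => hmeas l))
          (hindep.comp (measurable_pi_decide_le _) (measurable_pi_decide_le _)) hunif _ hbound
    _ = q := by
        rw [ENNReal.toReal_pow, ENNReal.toReal_inv, ENNReal.toReal_ofNat, mul_left_comm,
          ← mul_pow, inv_mul_cancel₀ two_ne_zero, one_pow, mul_one]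

theorem selective_seq_testing_II
    {Ω : Type*} [MeasurableSpace Ω] (μ : Measure Ω) [IsProbabilityMeasure μ]
    (N : ℕ) (P : ℕ → Ω → ℝ) (hmeas : ∀ l, Measurable (P l))
    (hval : ∀ l ∈ Finset.Icc 1 N, ∀ ω, P l ω = 1/2 ∨ P l ω = 1)
    (H0 : Finset ℕ) (hH0 : H0 ⊆ Finset.Icc 1 N)
    -- null p-values are fair coins on {1/2, 1}
    (hnull : ∀ l ∈ H0, μ {ω | P l ω = 1/2} = 1/2 ∧ μ {ω | P l ω = 1} = 1/2)
    -- null p-values are jointly independent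
    (hiid : iIndepFun (m := fun _ : {l // l ∈ H0} => (inferInstance : MeasurableSpace ℝ))
      (fun l : {l // l ∈ H0} => P l.1) μ)
    -- null p-values are independent of the non-null p-values
    (hindep : IndepFun (fun ω => fun l : {l // l ∈ H0} => P l.1 ω)
      (fun ω => fun l : {l // l ∈ Finset.Icc 1 N \ H0} => P l.1 ω) μ)
    (q : ℝ) (hq : q ∈ Set.Icc (0:ℝ) 1)
    (K : Finset ℕ) (hK : K ⊆ Finset.Icc 1 N)
    (khat : Ω → ℕ)
    (hkhat : ∀ ω, khat ω =
      (K.filter (fun k =>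
        (1 + (((Finset.Icc 1 k).filter (fun l => 1/2 < P l ω)).card : ℝ)) /
          (max (((Finset.Icc 1 k).filter (fun l => P l ω ≤ 1/2)).card : ℝ) 1) ≤ q)).sup id)
    (V R : Ω → ℕ)
    (hV : ∀ ω, V ω =
      ((Finset.Icc 1 (khat ω)).filter (fun l => l ∈ H0 ∧ P l ω ≤ 1/2)).card)
    (hR : ∀ ω, R ω = ((Finset.Icc 1 (khat ω)).filter (fun l => P l ω ≤ 1/2)).card) :
    ∫ ω, (V ω : ℝ) / (max (R ω : ℝ) 1) ∂μ ≤ q :=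
  selective_seq_testing_II_general μ N P hmeas H0 hH0 hnull hiid hindep q hq K hK khat hkhat V R hV
    hR
end

section
/- Let (B_l)_{l=1}^{m} be i.i.d. Bernoulli(1/2) random variables and let τ be a stopping time with respect to the reverse filtration generated by the partial counts (i.e., τ is a random index measurable appropriately). Then E[ #{l ≤ τ : B_l = 1} / (1 + #{l ≤ τ : B_l = 0}) ] ≤ 1. -/
/-!
Write `S k` for the number of ones among `B 1, …, B k` and `M k = S k / (1 + (k - S k))`.
Given the counts `S j` for `j ≥ k + 1`, exchangeability of `B 1, …, B (k + 1)` makes `B (k + 1)`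
a Bernoulli variable with parameter `S (k + 1) / (k + 1)`; under this conditional law the mean of
`M k` is `M (k + 1)` when `S (k + 1) ≤ k`, and `k < k + 1 = M (k + 1)` otherwise. So `M` is a
supermartingale in reverse time, optional stopping gives `E[M τ] ≤ E[M m]`, and the binomial law of
`S m` gives `E[M m] = ∑ₛ C(m, s) 2⁻ᵐ s / (m + 1 - s) = 1 - 2⁻ᵐ`.
-/

open MeasureTheory ProbabilityTheory Finset

namespace Knockoff

/-- `ratio k s` is `#ones / (1 + #zeros)` on `B 1, …, B k` when `s` of them are ones. -/
noncomputable def ratio (k s : ℕ) : ℝ := s / (1 + (k - s : ℕ))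

lemma ratio_zero (k : ℕ) : ratio k 0 = 0 := by simp [ratio]

lemma ratio_self (k : ℕ) : ratio k k = k := by simp [ratio]

lemma norm_ratio_le (k s : ℕ) : ‖ratio k s‖ ≤ s := by
  rw [ratio, Real.norm_of_nonneg (by positivity)]
  exact div_le_self s.cast_nonneg (le_add_of_nonneg_right (Nat.cast_nonneg _))

/-- The one-step inequality of the reverse supermartingale: `a` and `b` are the masses of
`{S (k+1) = s, B (k+1) = 1}` and `{S (k+1) = s, B (k+1) = 0}` inside a tail event, and `h` says
that `B (k+1)` is one with conditional probability `s / (k+1)`. -/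
lemma ratio_step {k s : ℕ} (hs : s ≤ k + 1) {a b : ℝ} (ha : 0 ≤ a)
    (h : (k + 1) * a = s * (a + b)) :
    a * ratio k (s - 1) + b * ratio k s ≤ (a + b) * ratio (k + 1) s := by
  rcases s with _ | t
  · have ha0 : a = 0 := by simpa [Nat.cast_add_one_ne_zero] using h
    simp [ha0, ratio_zero]
  push_cast at h
  obtain ht | rfl := (Nat.le_of_lt_succ hs).lt_or_eq
  · have hb : b = (k - t) * a / (t + 1) := by field_simp; linear_combination -h
    have hkt : ((k - t : ℕ) : ℝ) = k - t := Nat.cast_sub ht.le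
    have hkt' : (1 + (k - (t + 1) : ℕ) : ℝ) = k - t := by
      rw [Nat.cast_sub ht]; push_cast; ring
    have hpos : (0 : ℝ) < k - t := sub_pos.2 (by exact_mod_cast ht)
    simp only [ratio, Nat.add_sub_cancel, Nat.add_sub_add_right, hkt, hkt', hb]
    apply le_of_eq
    field_simp
    push_cast
    ring
  · have hb : b = 0 := by nlinarith
    simp only [Nat.add_sub_cancel, ratio_self, hb]
    push_cast
    nlinarith

lemma choose_succ_mul_ratio_succ {m s : ℕ} (hs : s < m) :
    (m.choose (s + 1) : ℝ) * ratio m (s + 1) = m.choose s := by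
  have hden : (1 + (m - (s + 1) : ℕ) : ℝ) = (m - s : ℕ) := by norm_cast; omega
  have hpos : (0 : ℝ) < (m - s : ℕ) := by exact_mod_cast Nat.sub_pos_of_lt hs
  rw [ratio, hden, mul_div_assoc', div_eq_iff hpos.ne']
  exact_mod_cast Nat.choose_succ_right_eq m s

lemma sum_choose_mul_ratio_le (m : ℕ) :
    ∑ s ∈ range (m + 1), (m.choose s : ℝ) * ratio m s ≤ 2 ^ m := by
  rw [sum_range_succ', ratio_zero, mul_zero, add_zero]
  calc ∑ s ∈ range m, (m.choose (s + 1) : ℝ) * ratio m (s + 1)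
      = ∑ s ∈ range m, (m.choose s : ℝ) :=
        sum_congr rfl fun s hs => choose_succ_mul_ratio_succ (mem_range.1 hs)
    _ ≤ ∑ s ∈ range (m + 1), (m.choose s : ℝ) :=
        sum_le_sum_of_subset_of_nonneg (range_subset_range.2 m.le_succ) fun _ _ _ => by positivity
    _ = 2 ^ m := by exact_mod_cast Nat.sum_range_choose m

section

variable {Ω : Type*} {mΩ : MeasurableSpace Ω}

def reverseFiltration {G : ℕ → MeasurableSpace Ω} (hanti : Antitone G) (hle : ∀ n, G n ≤ mΩ)
    (m : ℕ) : Filtration ℕ mΩ :=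
  ⟨fun j => G (m - j), fun _ _ hij => hanti (Nat.sub_le_sub_left hij m), fun _ => hle _⟩

theorem integral_stopped_le_of_setIntegral_le_succ {μ : Measure Ω} [IsFiniteMeasure μ]
    {G : ℕ → MeasurableSpace Ω} (hanti : Antitone G) (hle : ∀ n, G n ≤ mΩ) {f : ℕ → Ω → ℝ}
    (hadp : ∀ n, StronglyMeasurable[G n] (f n)) (hint : ∀ n, Integrable (f n) μ)
    (hstep : ∀ n A, MeasurableSet[G (n + 1)] A → ∫ ω in A, f n ω ∂μ ≤ ∫ ω in A, f (n + 1) ω ∂μ)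
    {m : ℕ} {τ : Ω → ℕ} (hτle : ∀ ω, τ ω ≤ m) (hτ : ∀ k, MeasurableSet[G k] {ω | τ ω = k}) :
    ∫ ω, f (τ ω) ω ∂μ ≤ ∫ ω, f m ω ∂μ := by
  set 𝒢 := reverseFiltration hanti hle m
  have hsub : Submartingale (fun j ω => -f (m - j) ω) 𝒢 μ := by
    refine submartingale_of_setIntegral_le_succ (fun j => (hadp _).neg) (fun j => (hint _).neg)
      fun j A hA => ?_
    simp only [integral_neg, neg_le_neg_iff]
    rcases Nat.lt_or_ge j m with hj | hj
    · have := hstep (m - (j + 1)) A (by rwa [show m - (j + 1) + 1 = m - j by omega])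
      rwa [show m - (j + 1) + 1 = m - j by omega] at this
    · rw [Nat.sub_eq_zero_of_le hj, Nat.sub_eq_zero_of_le (by omega)]
  have hσ : IsStoppingTime 𝒢 fun ω => WithTop.some (m - τ ω) := by
    refine isStoppingTime_of_measurableSet_eq fun j => ?_
    rcases Nat.lt_or_ge m j with hj | hj
    · convert @MeasurableSet.empty _ (𝒢 j)
      ext ω
      simp only [Set.mem_ofPred_eq, WithTop.coe_eq_coe, Set.mem_empty_iff_false, iff_false]
      omega
    · have hset : {ω | WithTop.some (m - τ ω) = WithTop.some j} = {ω | τ ω = m - j} := by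
        ext ω
        simp only [Set.mem_ofPred_eq, WithTop.coe_eq_coe]
        have := hτle ω
        omega
      rw [hset]
      exact hτ (m - j)
  have := hsub.expected_stoppedValue_mono (isStoppingTime_const 𝒢 0) hσ (fun ω => bot_le)
    (N := m) (fun ω => WithTop.coe_le_coe.2 (Nat.sub_le _ _))
  rw [stoppedValue_const] at this
  change ∫ ω, -f (m - 0) ω ∂μ ≤ ∫ ω, -f (m - (m - τ ω)) ω ∂μ at this
  simpa only [Nat.sub_zero, Nat.sub_sub_self (hτle _), integral_neg, neg_le_neg_iff] using this

lemma integral_comp_eq_sum {α : Type*} [MeasurableSpace α] [MeasurableSingletonClass α]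
    {ν : Measure Ω} [IsFiniteMeasure ν] {X : Ω → α} (hX : Measurable X) {t : Finset α}
    (ht : ∀ ω, X ω ∈ t) (f : α → ℝ) :
    ∫ ω, f (X ω) ∂ν = ∑ a ∈ t, ν.real (X ⁻¹' {a}) * f a := by
  have hsum : (fun ω => f (X ω)) = fun ω => ∑ a ∈ t, (X ⁻¹' {a}).indicator (fun _ => f a) ω := by
    funext ω
    rw [sum_eq_single_of_mem (X ω) (ht ω)]
    · exact (Set.indicator_of_mem rfl _).symm
    · exact fun a _ ha => Set.indicator_of_notMem (Ne.symm ha) _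
  rw [hsum, integral_finsetSum _ fun a _ =>
    (integrable_const (f a)).indicator (hX (measurableSet_singleton a))]
  simp [integral_indicator_const _ (hX (measurableSet_singleton _))]

end

section Counts

variable {Ω : Type*} (B : ℕ → Ω → Bool)

def countTrue (U : Finset ℕ) (ω : Ω) : ℕ := #{i ∈ U | B i ω = true}

abbrev coordSigma (I : Set ℕ) : MeasurableSpace Ω :=
  ⨆ i ∈ I, MeasurableSpace.comap (B i) inferInstance

abbrev tailCountSigma (n : ℕ) : MeasurableSpace Ω :=
  MeasurableSpace.comap (fun ω j => if n ≤ j then countTrue B (Icc 1 j) ω else 0) inferInstance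

variable {B}

lemma countTrue_union {U V : Finset ℕ} (h : Disjoint U V) (ω : Ω) :
    countTrue B (U ∪ V) ω = countTrue B U ω + countTrue B V ω := by
  simp only [countTrue, filter_union, card_union_of_disjoint (disjoint_filter_filter h)]

lemma countTrue_Icc_eq_add {n j : ℕ} (h : n ≤ j) (ω : Ω) :
    countTrue B (Icc 1 j) ω = countTrue B (Icc 1 n) ω + countTrue B (Ioc n j) ω := by
  rw [← countTrue_union (disjoint_left.2 fun i hi hi' => by simp at hi hi'; omega)]
  congr 1
  ext i; simp; omega

lemma countTrue_singleton (i : ℕ) (ω : Ω) : countTrue B {i} ω = (B i ω).toNat := by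
  cases h : B i ω <;> simp [countTrue, filter_singleton, h]

lemma countTrue_Icc_succ (k : ℕ) (ω : Ω) :
    countTrue B (Icc 1 (k + 1)) ω = countTrue B (Icc 1 k) ω + (B (k + 1) ω).toNat := by
  rw [countTrue_Icc_eq_add k.le_succ, Nat.Ioc_succ_singleton, countTrue_singleton]

lemma countTrue_eq_erase_add {U : Finset ℕ} {i : ℕ} (hi : i ∈ U) (ω : Ω) :
    countTrue B U ω = countTrue B (U.erase i) ω + (B i ω).toNat := by
  conv_lhs => rw [← insert_erase hi, insert_eq,
    countTrue_union (disjoint_singleton_left.2 (notMem_erase i U)), countTrue_singleton, add_comm]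

lemma countTrue_le_card (U : Finset ℕ) (ω : Ω) : countTrue B U ω ≤ #U := card_filter_le _ _

lemma card_filter_false_eq (U : Finset ℕ) (ω : Ω) :
    #{i ∈ U | B i ω = false} = #U - countTrue B U ω := by
  rw [← card_filter_add_card_filter_not (s := U) (fun i => B i ω = true)]
  simp [countTrue]

lemma setOf_filter_eq {U T : Finset ℕ} (hT : T ⊆ U) :
    {ω | {i ∈ U | B i ω = true} = T} = ⋂ i ∈ U, B i ⁻¹' {decide (i ∈ T)} := by
  ext ω
  simp only [Set.mem_ofPred_eq, Set.mem_iInter, Set.mem_preimage, Set.mem_singleton_iff,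
    Finset.ext_iff, mem_filter]
  constructor
  · intro h i hi
    cases hB : B i ω
    · simpa using fun hiT => by simpa [hB] using ((h i).2 hiT).2
    · simpa using (h i).1 ⟨hi, hB⟩
  · intro h i
    have := @hT i
    by_cases hi : i ∈ U <;> simp_all

lemma measurable_coordSigma {I : Set ℕ} {i : ℕ} (hi : i ∈ I) : Measurable[coordSigma B I] (B i) :=
  (comap_measurable (B i)).mono
    (le_iSup₂ (f := fun i (_ : i ∈ I) => MeasurableSpace.comap (B i) inferInstance) i hi) le_rfl

lemma measurable_countTrue {m : MeasurableSpace Ω} {U : Finset ℕ}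
    (h : ∀ i ∈ U, Measurable[m] (B i)) : Measurable[m] (countTrue B U) := by
  show Measurable fun ω => #{i ∈ U | B i ω = true}
  simp only [card_filter]
  exact Finset.measurable_sum _ fun i hi =>
    Measurable.ite ((h i hi) (measurableSet_singleton true)) measurable_const measurable_const

lemma measurable_countTrue_tailCountSigma {n j : ℕ} (h : n ≤ j) :
    Measurable[tailCountSigma B n] (countTrue B (Icc 1 j)) := by
  simpa [h] using (@measurable_pi_iff _ _ _ (tailCountSigma B n) _ _).1 (comap_measurable _) j

lemma measurable_ratio_countTrue (n : ℕ) :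
    Measurable[tailCountSigma B n] fun ω => ratio n (countTrue B (Icc 1 n) ω) :=
  Measurable.comp (g := ratio n) measurable_from_nat (measurable_countTrue_tailCountSigma le_rfl)

lemma antitone_tailCountSigma : Antitone (tailCountSigma B) := by
  intro n n' h
  refine Measurable.comap_le (@measurable_pi_lambda _ _ _ (tailCountSigma B n) _ _ fun j => ?_)
  split_ifs with hj
  · exact measurable_countTrue_tailCountSigma (h.trans hj)
  · exact measurable_const

/-- On `{S n = s}` every count `S j` with `j ≥ n` is `s` plus a count of coordinates beyond `n`. -/
lemma exists_coordSigma_Ioi_inter_eq {n : ℕ} {A : Set Ω}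
    (hA : MeasurableSet[tailCountSigma B n] A) (s : ℕ) :
    ∃ D, MeasurableSet[coordSigma B (Set.Ioi n)] D ∧
      A ∩ {ω | countTrue B (Icc 1 n) ω = s} = D ∩ {ω | countTrue B (Icc 1 n) ω = s} := by
  obtain ⟨E, hE, rfl⟩ := hA
  set H : Ω → ℕ → ℕ := fun ω j => if n ≤ j then s + countTrue B (Ioc n j) ω else 0
  have hH : Measurable[coordSigma B (Set.Ioi n)] H := by
    refine @measurable_pi_lambda _ _ _ (coordSigma B (Set.Ioi n)) _ H fun j => ?_
    by_cases hj : n ≤ j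
    · simp only [H, hj, if_true]
      exact (measurable_countTrue fun i hi => measurable_coordSigma (mem_Ioc.1 hi).1).const_add s
    · simp only [H, hj, if_false]
      exact measurable_const
  refine ⟨H ⁻¹' E, hH hE, ?_⟩
  ext ω
  simp only [Set.mem_inter_iff, Set.mem_preimage, Set.mem_ofPred_eq]
  refine and_congr_left fun hω => ?_
  suffices (fun j => if n ≤ j then countTrue B (Icc 1 j) ω else 0) = H ω by rw [this]
  funext j
  by_cases hj : n ≤ j
  · simp [H, hj, countTrue_Icc_eq_add hj, hω]
  · simp [H, hj]

variable [MeasurableSpace Ω]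

lemma tailCountSigma_le (hmeas : ∀ i, Measurable (B i)) (n : ℕ) :
    tailCountSigma B n ≤ ‹MeasurableSpace Ω› := by
  refine Measurable.comap_le (measurable_pi_lambda _ fun j => ?_)
  split_ifs
  · exact measurable_countTrue fun i _ => hmeas i
  · exact measurable_const

variable {μ : Measure Ω}

lemma integrable_ratio_countTrue [IsFiniteMeasure μ] (hmeas : ∀ i, Measurable (B i)) (n : ℕ) :
    Integrable (fun ω => ratio n (countTrue B (Icc 1 n) ω)) μ :=
  Integrable.of_bound
    ((measurable_ratio_countTrue n).mono (tailCountSigma_le hmeas n) le_rfl).aestronglyMeasurable n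
    (ae_of_all _ fun ω => (norm_ratio_le _ _).trans
      (by exact_mod_cast (countTrue_le_card _ ω).trans (Nat.card_Icc 1 n).le))

lemma measure_inter_eq_mul_of_disjoint (hmeas : ∀ i, Measurable (B i)) (hiid : iIndepFun B μ)
    {I J : Set ℕ} (hIJ : Disjoint I J) {D E : Set Ω} (hD : MeasurableSet[coordSigma B I] D)
    (hE : MeasurableSet[coordSigma B J] E) : μ (D ∩ E) = μ D * μ E :=
  (Indep_iff _ _ _).1 (indep_iSup_of_disjoint (fun i => (hmeas i).comap_le) hiid.iIndep hIJ)
    D E hD hE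

lemma measure_preimage_eq_half [IsProbabilityMeasure μ] (hmeas : ∀ i, Measurable (B i))
    (hber : ∀ l, μ {ω | B l ω = true} = 1 / 2) (i : ℕ) (b : Bool) :
    μ (B i ⁻¹' {b}) = 2⁻¹ := by
  have htrue : μ (B i ⁻¹' {true}) = 2⁻¹ := by rw [← one_div]; exact hber i
  cases b
  · rw [show B i ⁻¹' {false} = (B i ⁻¹' {true})ᶜ by ext; simp,
      prob_compl_eq_one_sub (hmeas i (measurableSet_singleton true)), htrue,
      ENNReal.one_sub_inv_two]
  · exact htrue

section Law

variable [IsProbabilityMeasure μ] (hmeas : ∀ i, Measurable (B i)) (hiid : iIndepFun B μ)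
  (hber : ∀ l, μ {ω | B l ω = true} = 1 / 2)
include hmeas hiid hber

lemma measure_filter_eq {U T : Finset ℕ} (hT : T ⊆ U) :
    μ {ω | {i ∈ U | B i ω = true} = T} = 2⁻¹ ^ #U := by
  rw [setOf_filter_eq hT,
    hiid.meas_biInter fun i _ => comap_measurable (B i) (measurableSet_singleton _)]
  simp [measure_preimage_eq_half hmeas hber]

lemma measure_countTrue_eq (U : Finset ℕ) (s : ℕ) :
    μ {ω | countTrue B U ω = s} = (#U).choose s * 2⁻¹ ^ #U := by
  have hdec : {ω | countTrue B U ω = s}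
      = ⋃ T ∈ powersetCard s U, {ω | {i ∈ U | B i ω = true} = T} := by
    ext ω
    simp only [Set.mem_ofPred_eq, Set.mem_iUnion, mem_powersetCard, exists_prop]
    exact ⟨fun h => ⟨_, ⟨filter_subset _ _, h⟩, rfl⟩,
      fun ⟨T, ⟨_, hT⟩, h⟩ => (congrArg card h).trans hT⟩
  rw [hdec, measure_biUnion_finset]
  · rw [sum_congr rfl fun T hT => measure_filter_eq hmeas hiid hber (mem_powersetCard.1 hT).1,
      sum_const, card_powersetCard, nsmul_eq_mul]
  · intro T _ T' _ hne
    exact Set.disjoint_left.2 fun ω h h' => hne (h.symm.trans h')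
  · intro T hT
    rw [setOf_filter_eq (mem_powersetCard.1 hT).1]
    exact MeasurableSet.biInter (Set.to_countable _) fun i _ => hmeas i (measurableSet_singleton _)

lemma card_mul_measure_countTrue_inter {U : Finset ℕ} {i : ℕ} (hi : i ∈ U) (s : ℕ) :
    #U * μ ({ω | countTrue B U ω = s} ∩ {ω | B i ω = true}) = s * μ {ω | countTrue B U ω = s} := by
  have hcount := countTrue_eq_erase_add (B := B) hi
  rcases s with _ | t
  · have hempty : {ω | countTrue B U ω = 0} ∩ {ω | B i ω = true} = ∅ := by
      ext ω; simp [hcount ω]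
    simp [hempty]
  have hslice : {ω | countTrue B U ω = t + 1} ∩ {ω | B i ω = true}
      = {ω | countTrue B (U.erase i) ω = t} ∩ {ω | B i ω = true} := by
    ext ω; cases h : B i ω <;> simp [hcount ω, h]
  have hindep : μ ({ω | countTrue B (U.erase i) ω = t} ∩ {ω | B i ω = true})
      = μ {ω | countTrue B (U.erase i) ω = t} * μ {ω | B i ω = true} :=
    measure_inter_eq_mul_of_disjoint hmeas hiid (Set.disjoint_singleton_right.2 (notMem_erase i U))
      (measurable_countTrue (fun j hj => measurable_coordSigma hj) (measurableSet_singleton t))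
      (measurable_coordSigma (Set.mem_singleton i) (measurableSet_singleton true))
  have hchoose := congrArg (Nat.cast : ℕ → ENNReal) (Nat.add_one_mul_choose_eq #(U.erase i) t)
  push_cast at hchoose
  rw [hslice, hindep, measure_countTrue_eq hmeas hiid hber, measure_countTrue_eq hmeas hiid hber,
    hber, ← card_erase_add_one hi, one_div, pow_succ]
  push_cast
  calc ((#(U.erase i) : ENNReal) + 1) * ((#(U.erase i)).choose t * 2⁻¹ ^ #(U.erase i) * 2⁻¹)
      = ((#(U.erase i) + 1) * (#(U.erase i)).choose t) * (2⁻¹ ^ #(U.erase i) * 2⁻¹) := by ring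
    _ = _ := by rw [hchoose]; ring

lemma natCast_mul_measure_inter_countTrue_inter {n : ℕ} (hn : 1 ≤ n) {A : Set Ω}
    (hA : MeasurableSet[tailCountSigma B n] A) (s : ℕ) :
    n * μ (A ∩ {ω | countTrue B (Icc 1 n) ω = s} ∩ {ω | B n ω = true})
      = s * μ (A ∩ {ω | countTrue B (Icc 1 n) ω = s}) := by
  obtain ⟨D, hD, hAD⟩ := exists_coordSigma_Ioi_inter_eq hA s
  have hindep : ∀ C, MeasurableSet[coordSigma B ↑(Icc 1 n)] C → μ (D ∩ C) = μ D * μ C :=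
    fun C hC => measure_inter_eq_mul_of_disjoint hmeas hiid
      (Set.disjoint_left.2 fun i hi hi' => by simp at hi hi'; omega) hD hC
  have hS : MeasurableSet[coordSigma B ↑(Icc 1 n)] {ω | countTrue B (Icc 1 n) ω = s} :=
    measurable_countTrue (fun i hi => measurable_coordSigma hi) (measurableSet_singleton s)
  have hSB : MeasurableSet[coordSigma B ↑(Icc 1 n)]
      ({ω | countTrue B (Icc 1 n) ω = s} ∩ {ω | B n ω = true}) :=
    hS.inter (measurable_coordSigma (by simpa using hn) (measurableSet_singleton true))
  have hcount := card_mul_measure_countTrue_inter hmeas hiid hber (U := Icc 1 n) (i := n)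
    (by simpa using hn) s
  rw [Nat.card_Icc, Nat.add_sub_cancel] at hcount
  rw [hAD, Set.inter_assoc, hindep _ hS, hindep _ hSB, mul_left_comm, hcount, mul_left_comm]

lemma add_one_mul_measureReal_inter_countTrue_inter {k s : ℕ} {A : Set Ω}
    (hA : MeasurableSet[tailCountSigma B (k + 1)] A) :
    (k + 1) * μ.real (A ∩ {ω | countTrue B (Icc 1 (k + 1)) ω = s} ∩ {ω | B (k + 1) ω = true})
      = s * (μ.real (A ∩ {ω | countTrue B (Icc 1 (k + 1)) ω = s} ∩ {ω | B (k + 1) ω = true})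
        + μ.real (A ∩ {ω | countTrue B (Icc 1 (k + 1)) ω = s} ∩ {ω | B (k + 1) ω = false})) := by
  have hsplit := measure_inter_add_sdiff (μ := μ) (t := {ω | B (k + 1) ω = true})
    (A ∩ {ω | countTrue B (Icc 1 (k + 1)) ω = s}) (hmeas (k + 1) (measurableSet_singleton true))
  have hcompl : (A ∩ {ω | countTrue B (Icc 1 (k + 1)) ω = s}) \ {ω | B (k + 1) ω = true}
      = A ∩ {ω | countTrue B (Icc 1 (k + 1)) ω = s} ∩ {ω | B (k + 1) ω = false} := by
    ext ω; simp
  have h := natCast_mul_measure_inter_countTrue_inter hmeas hiid hber (n := k + 1) (by omega) hA s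
  rw [← hsplit, hcompl] at h
  simpa [ENNReal.toReal_mul, ENNReal.toReal_add, measureReal_def] using congrArg ENNReal.toReal h

lemma setIntegral_ratio_le_succ (k : ℕ) {A : Set Ω}
    (hA : MeasurableSet[tailCountSigma B (k + 1)] A) :
    ∫ ω in A, ratio k (countTrue B (Icc 1 k) ω) ∂μ
      ≤ ∫ ω in A, ratio (k + 1) (countTrue B (Icc 1 (k + 1)) ω) ∂μ := by
  set X : Ω → ℕ × Bool := fun ω => (countTrue B (Icc 1 (k + 1)) ω, B (k + 1) ω)
  have hX : Measurable X := (measurable_countTrue fun i _ => hmeas i).prodMk (hmeas _)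
  have ht : ∀ ω, X ω ∈ range (k + 2) ×ˢ univ := fun ω => by
    simpa [X, Nat.lt_succ_iff] using countTrue_le_card (B := B) (Icc 1 (k + 1)) ω
  have hprev : ∀ ω, countTrue B (Icc 1 k) ω = (X ω).1 - (X ω).2.toNat := fun ω => by
    simp [X, countTrue_Icc_succ]
  have hcell : ∀ p, (μ.restrict A).real (X ⁻¹' {p})
      = μ.real (A ∩ {ω | countTrue B (Icc 1 (k + 1)) ω = p.1} ∩ {ω | B (k + 1) ω = p.2}) := by
    intro p
    rw [measureReal_restrict_apply (hX (measurableSet_singleton p))]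
    congr 1
    ext ω
    simp only [X, Set.mem_preimage, Set.mem_singleton_iff, Prod.ext_iff, Set.mem_inter_iff,
      Set.mem_ofPred_eq]
    tauto
  calc ∫ ω in A, ratio k (countTrue B (Icc 1 k) ω) ∂μ
      = ∫ ω in A, ratio k ((X ω).1 - (X ω).2.toNat) ∂μ := by simp_rw [hprev]
    _ = ∑ p ∈ range (k + 2) ×ˢ univ, (μ.restrict A).real (X ⁻¹' {p}) * ratio k (p.1 - p.2.toNat) :=
        integral_comp_eq_sum hX ht fun p => ratio k (p.1 - p.2.toNat)
    _ ≤ ∑ p ∈ range (k + 2) ×ˢ univ, (μ.restrict A).real (X ⁻¹' {p}) * ratio (k + 1) p.1 := by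
        simp only [sum_product]
        refine sum_le_sum fun s hs => ?_
        simp only [Fintype.sum_bool, hcell, Bool.toNat_true, Bool.toNat_false, Nat.sub_zero]
        linarith [ratio_step (Nat.lt_succ_iff.1 (mem_range.1 hs)) measureReal_nonneg
          (add_one_mul_measureReal_inter_countTrue_inter hmeas hiid hber hA)]
    _ = ∫ ω in A, ratio (k + 1) (countTrue B (Icc 1 (k + 1)) ω) ∂μ :=
        (integral_comp_eq_sum hX ht fun p => ratio (k + 1) p.1).symm

lemma integral_ratio_countTrue_le_one (m : ℕ) :
    ∫ ω, ratio m (countTrue B (Icc 1 m) ω) ∂μ ≤ 1 := by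
  have hlaw : ∀ s, μ.real (countTrue B (Icc 1 m) ⁻¹' {s}) = m.choose s * 2⁻¹ ^ m := by
    intro s
    have := measure_countTrue_eq hmeas hiid hber (Icc 1 m) s
    rw [Nat.card_Icc, Nat.add_sub_cancel] at this
    simp [measureReal_def, Set.preimage, this]
  rw [integral_comp_eq_sum (measurable_countTrue fun i _ => hmeas i) (t := range (m + 1))
    fun ω => by simpa [Nat.lt_succ_iff] using countTrue_le_card (B := B) (Icc 1 m) ω]
  calc ∑ s ∈ range (m + 1), μ.real (countTrue B (Icc 1 m) ⁻¹' {s}) * ratio m s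
      = 2⁻¹ ^ m * ∑ s ∈ range (m + 1), (m.choose s : ℝ) * ratio m s := by
        simp only [hlaw, mul_sum]
        exact sum_congr rfl fun _ _ => by ring
    _ ≤ 2⁻¹ ^ m * 2 ^ m := by gcongr; exact sum_choose_mul_ratio_le m
    _ = 1 := by rw [← mul_pow]; norm_num

end Law

end Counts

end Knockoff

open Knockoff

theorem knockoff_martingale_inequality
    {Ω : Type*} [MeasurableSpace Ω] (μ : Measure Ω) [IsProbabilityMeasure μ]
    (m : ℕ) (B : ℕ → Ω → Bool) (hmeas : ∀ l, Measurable (B l))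
    -- i.i.d. Bernoulli(1/2)
    (hiid : iIndepFun B μ)
    (hber : ∀ l, μ {ω | B l ω = true} = 1/2)
    -- running counts of ones among the first l coordinates
    (S : ℕ → Ω → ℕ)
    (hS : ∀ l ω, S l ω = ((Finset.Icc 1 l).filter (fun i => B i ω = true)).card)
    -- reverse filtration: G k is generated by the counts S_j for j ≥ k
    (G : ℕ → MeasurableSpace Ω)
    (hG : ∀ k, G k = MeasurableSpace.comap
      (fun ω => fun j : ℕ => if k ≤ j then S j ω else 0) inferInstance)
    -- τ is a stopping time in reverse time: {τ = k} is G k-measurable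
    (τ : Ω → ℕ) (hτle : ∀ ω, τ ω ≤ m)
    (hτ : ∀ k, MeasurableSet[G k] {ω | τ ω = k}) :
    ∫ ω, (((Finset.Icc 1 (τ ω)).filter (fun l => B l ω = true)).card : ℝ) /
        (1 + (((Finset.Icc 1 (τ ω)).filter (fun l => B l ω = false)).card : ℝ)) ∂μ ≤ 1 := by
  obtain rfl : S = fun l => countTrue B (Icc 1 l) := funext fun l => funext (hS l)
  obtain rfl : G = tailCountSigma B := funext hG
  have hintegrand : ∀ ω, (#{l ∈ Icc 1 (τ ω) | B l ω = true} : ℝ) /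
      (1 + #{l ∈ Icc 1 (τ ω) | B l ω = false}) = ratio (τ ω) (countTrue B (Icc 1 (τ ω)) ω) := by
    intro ω
    rw [card_filter_false_eq, Nat.card_Icc, Nat.add_sub_cancel]
    rfl
  simp_rw [hintegrand]
  calc ∫ ω, ratio (τ ω) (countTrue B (Icc 1 (τ ω)) ω) ∂μ
      ≤ ∫ ω, ratio m (countTrue B (Icc 1 m) ω) ∂μ :=
        integral_stopped_le_of_setIntegral_le_succ antitone_tailCountSigma (tailCountSigma_le hmeas)
          (fun n => (measurable_ratio_countTrue n).stronglyMeasurable)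
          (integrable_ratio_countTrue hmeas)
          (fun n _ hA => setIntegral_ratio_le_succ hmeas hiid hber n hA) hτle hτ
    _ ≤ 1 := integral_ratio_countTrue_le_one hmeas hiid hber m
end

section
/- Let B₁, …, B_m be i.i.d. Bernoulli(1/2) random variables (taking values in {0,1}) and set S = B₁ + ⋯ + B_m. Then E[ S / (1 + m − S) ] ≤ 1. -/
/-!
Write `S / (1 + m - S) = ∑ l, B l / (1 + m - S)`. Where `B l = 1`, the denominator is `m - T l`
with `T l = ∑ j ≠ l, B j`, which is independent of `B l`; as `B l` and `1 - B l` have the same mean,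
`E[B l / (m - T l)] = E[(1 - B l) / (m - T l)]`, and where `B l = 0` this last denominator is
`m - S`. Summing over `l`, the expectation equals `E[(m - S) / (m - S)] ≤ 1` (the quotient is `0`
where `S = m`).
-/

open scoped Classical
open MeasureTheory ProbabilityTheory

section FiniteSums

open Finset

variable {ι : Type*} [Fintype ι] [DecidableEq ι] {b : ι → ℕ}

lemma one_le_card_sub_sum_erase (hb : ∀ i, b i ≤ 1) (i : ι) :
    1 ≤ (Fintype.card ι : ℝ) - ∑ j ∈ univ.erase i, (b j : ℝ) := by
  have hsum : ∑ j ∈ univ.erase i, b j ≤ (univ.erase i).card • 1 :=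
    sum_le_card_nsmul _ _ _ fun j _ => hb j
  rw [card_erase_of_mem (mem_univ i), card_univ, smul_eq_mul, mul_one] at hsum
  have hpos : 0 < Fintype.card ι := Fintype.card_pos_iff.mpr ⟨i⟩
  have : ((∑ j ∈ univ.erase i, b j : ℕ) : ℝ) + 1 ≤ Fintype.card ι := by exact_mod_cast (by omega)
  push_cast at this
  linarith

lemma sum_div_one_add_card_sub_sum (hb : ∀ i, b i ≤ 1) :
    (∑ i, (b i : ℝ)) / (1 + Fintype.card ι - ∑ i, (b i : ℝ)) =
      ∑ i, (b i : ℝ) / (Fintype.card ι - ∑ j ∈ univ.erase i, (b j : ℝ)) := by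
  rw [sum_div]
  refine sum_congr rfl fun i _ => ?_
  rw [← add_sum_erase _ _ (mem_univ i)]
  rcases Nat.le_one_iff_eq_zero_or_eq_one.mp (hb i) with h | h
  · simp [h]
  · simp only [h, Nat.cast_one]
    ring_nf

lemma sum_one_sub_div_card_sub_sum_erase_le_one (hb : ∀ i, b i ≤ 1) :
    ∑ i, (1 - b i : ℝ) / (Fintype.card ι - ∑ j ∈ univ.erase i, (b j : ℝ)) ≤ 1 := by
  have hterm : ∀ i, (1 - b i : ℝ) / (Fintype.card ι - ∑ j ∈ univ.erase i, (b j : ℝ)) =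
      (1 - b i) / (Fintype.card ι - ∑ j, (b j : ℝ)) := by
    intro i
    rw [← add_sum_erase _ _ (mem_univ i)]
    rcases Nat.le_one_iff_eq_zero_or_eq_one.mp (hb i) with h | h <;> simp [h]
  have hsum : ∑ i, (1 - b i : ℝ) = Fintype.card ι - ∑ i, (b i : ℝ) := by
    simp [sum_sub_distrib]
  simp_rw [hterm]
  rw [← sum_div, hsum]
  exact div_self_le_one _

end FiniteSums

section Probability

variable {Ω : Type*} [MeasurableSpace Ω] {μ : Measure Ω}

lemma ProbabilityTheory.IndepFun.integral_mul_eq_integral_mul_one_sub [IsProbabilityMeasure μ]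
    {X Y : Ω → ℝ} (hXY : IndepFun X Y μ) (hX : AEStronglyMeasurable X μ) (hY : Integrable Y μ)
    (hY_half : μ[Y] = 1 / 2) :
    ∫ ω, X ω * Y ω ∂μ = ∫ ω, X ω * (1 - Y ω) ∂μ := by
  have hXY' : IndepFun X (fun ω => 1 - Y ω) μ :=
    hXY.comp measurable_id (measurable_const.sub measurable_id)
  rw [hXY.integral_fun_mul_eq_mul_integral hX hY.aestronglyMeasurable,
    hXY'.integral_fun_mul_eq_mul_integral hX ((integrable_const 1).sub hY).aestronglyMeasurable,
    integral_sub (integrable_const 1) hY, hY_half]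
  norm_num

lemma integral_natCast_eq_measureReal {Y : Ω → ℕ} (hY : Measurable Y)
    (h01 : ∀ ω, Y ω = 0 ∨ Y ω = 1) :
    ∫ ω, (Y ω : ℝ) ∂μ = μ.real {ω | Y ω = 1} := by
  have hs : MeasurableSet {ω | Y ω = 1} := hY (measurableSet_singleton 1)
  rw [← integral_indicator_one hs]
  congr with ω
  rcases h01 ω with h | h <;> simp [h, Set.indicator]

lemma integral_div_eq_integral_one_sub_div_of_indepFun [IsProbabilityMeasure μ] {Y T : Ω → ℕ}
    (hY : Measurable Y) (hT : Measurable T) (h01 : ∀ ω, Y ω = 0 ∨ Y ω = 1)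
    (hY_half : μ {ω | Y ω = 1} = 1 / 2) (hTY : IndepFun T Y μ) (φ : ℕ → ℝ) :
    ∫ ω, (Y ω : ℝ) / φ (T ω) ∂μ = ∫ ω, (1 - Y ω : ℝ) / φ (T ω) ∂μ := by
  have hY_int : Integrable (fun ω => (Y ω : ℝ)) μ := by
    refine .of_bound (measurable_from_top.comp hY).aestronglyMeasurable 1 (ae_of_all _ fun ω => ?_)
    rcases h01 ω with h | h <;> simp [h]
  have hind : IndepFun (fun ω => (φ (T ω))⁻¹) (fun ω => (Y ω : ℝ)) μ :=
    hTY.comp (φ := fun t => (φ t)⁻¹) (ψ := fun n : ℕ => (n : ℝ))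
      measurable_from_top measurable_from_top
  simp_rw [div_eq_inv_mul]
  refine hind.integral_mul_eq_integral_mul_one_sub
    ((measurable_from_top (f := fun t : ℕ => (φ t)⁻¹)).comp hT).aestronglyMeasurable hY_int ?_
  rw [integral_natCast_eq_measureReal hY h01, measureReal_def, hY_half]
  simp

lemma integrable_div_of_abs_le_one_of_one_le [IsFiniteMeasure μ] {f g : Ω → ℝ}
    (hf : Measurable f) (hg : Measurable g) (hf_le : ∀ ω, |f ω| ≤ 1) (hg_ge : ∀ ω, 1 ≤ g ω) :
    Integrable (fun ω => f ω / g ω) μ := by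
  refine .of_bound (hf.div hg).aestronglyMeasurable 1 (ae_of_all _ fun ω => ?_)
  have hg_pos : 0 < g ω := zero_lt_one.trans_le (hg_ge ω)
  rw [Real.norm_eq_abs, abs_div, abs_of_pos hg_pos]
  exact div_le_one_of_le₀ ((hf_le ω).trans (hg_ge ω)) hg_pos.le

end Probability

theorem bernoulli_ratio_expectation
    {Ω : Type*} [MeasurableSpace Ω] (μ : Measure Ω) [IsProbabilityMeasure μ]
    (m : ℕ) (B : Fin m → Ω → ℕ) (hmeas : ∀ l, Measurable (B l))
    (hval : ∀ l ω, B l ω = 0 ∨ B l ω = 1)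
    (hiid : iIndepFun B μ)
    (hber : ∀ l, μ {ω | B l ω = 1} = 1/2)
    (S : Ω → ℕ) (hS : ∀ ω, S ω = ∑ l : Fin m, B l ω) :
    ∫ ω, (S ω : ℝ) / (1 + (m : ℝ) - (S ω : ℝ)) ∂μ ≤ 1 := by
  set T : Fin m → Ω → ℕ := fun l => ∑ j ∈ Finset.univ.erase l, B j
  have hB_le : ∀ ω l, B l ω ≤ 1 := fun ω l => by rcases hval l ω with h | h <;> omega
  have hB_abs : ∀ l ω, |(B l ω : ℝ)| ≤ 1 ∧ |1 - (B l ω : ℝ)| ≤ 1 := fun l ω => by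
    rcases hval l ω with h | h <;> simp [h]
  have hT_meas : ∀ l, Measurable (T l) := fun l => by
    simpa only [T, Finset.sum_fn] using Finset.measurable_sum _ fun j _ => hmeas j
  have hden : ∀ l ω, 1 ≤ (m : ℝ) - T l ω := fun l ω => by
    simpa [T] using one_le_card_sub_sum_erase (hB_le ω) l
  have hint : ∀ l, Integrable (fun ω => (B l ω : ℝ) / (m - T l ω)) μ := fun l =>
    integrable_div_of_abs_le_one_of_one_le (by fun_prop) (by fun_prop) (fun ω => (hB_abs l ω).1)
      (hden l)
  have hint' : ∀ l, Integrable (fun ω => (1 - B l ω : ℝ) / (m - T l ω)) μ := fun l =>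
    integrable_div_of_abs_le_one_of_one_le (by fun_prop) (by fun_prop) (fun ω => (hB_abs l ω).2)
      (hden l)
  calc ∫ ω, (S ω : ℝ) / (1 + (m : ℝ) - (S ω : ℝ)) ∂μ
      = ∫ ω, ∑ l, (B l ω : ℝ) / (m - T l ω) ∂μ := by
        congr with ω
        simpa [hS, T] using sum_div_one_add_card_sub_sum (hB_le ω)
    _ = ∑ l, ∫ ω, (1 - B l ω : ℝ) / (m - T l ω) ∂μ := by
        rw [integral_finsetSum _ fun l _ => hint l]
        exact Finset.sum_congr rfl fun l _ =>
          integral_div_eq_integral_one_sub_div_of_indepFun (hmeas l) (hT_meas l) (hval l) (hber l)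
            (hiid.indepFun_finsetSum_of_notMem hmeas (Finset.notMem_erase l _)) (fun t => m - t)
    _ = ∫ ω, ∑ l, (1 - B l ω : ℝ) / (m - T l ω) ∂μ :=
        (integral_finsetSum _ fun l _ => hint' l).symm
    _ ≤ ∫ _, (1 : ℝ) ∂μ :=
        integral_mono (integrable_finsetSum _ fun l _ => hint' l) (integrable_const 1) fun ω => by
          simpa [T] using sum_one_sub_div_card_sub_sum_erase_le_one (hB_le ω)
    _ = 1 := by simp
end
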